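/- arXiv:1901.08031 — 4 statements merged into one kernel-verified Lean document; each statement's English description precedes it below -/
import Mathlib

section
/- Let N be a positive integer, 0 < s < 1 with N > 2s, p > 1 and α ≤ -2s. Then there is no measurable function u : ℝ^N → [0,∞) which is locally bounded, not almost everywhere equal to zero, and satisfies u(x) = ∫_{ℝ^N} |y|^α u(y)^p |x-y|^{-(N-2s)} dy for almost every x ∈ ℝ^N. -/
/-!
A nontrivial nonnegative solution is bounded below on the unit ball: integrating the equation over
a bounded set of positive measure on which `u ≥ δ` gives `u ≥ c > 0` there. Feeding this back in
at a point `x` with `‖x‖ ≤ 2⁻ᵐ`, the kernel `‖y‖ ^ α / ‖x - y‖ ^ γ` is at least `T ^ α / (2T) ^ γ`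
on the shell `T / 2 < ‖y‖ ≤ T` (for `T ≥ 2‖x‖`), whose volume is a fixed multiple of `T ^ N`.
So each dyadic shell `T = 2⁻ᵏ`, `k < m`, contributes at least `K * T ^ (α + N - γ) ≥ K` for a
constant `K > 0`, as `α + N ≤ γ` (with `γ = N - 2s` this is `α ≤ -2s`). Hence `u x ≥ m * K` for
every `m`, contradicting the boundedness of `u` near the origin.
-/

open MeasureTheory Filter Set Metric Module

-- `γ` stands for the exponent `N - 2s` of the Riesz kernel.
noncomputable def henonIntegrand {E : Type*} [SeminormedAddCommGroup E] (α p γ : ℝ) (u : E → ℝ)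
    (x y : E) : ℝ :=
  ‖y‖ ^ α * u y ^ p / ‖x - y‖ ^ γ

def SolvesHenonAt {E : Type*} [SeminormedAddCommGroup E] [MeasurableSpace E] (μ : Measure E)
    (α p γ : ℝ) (u : E → ℝ) (x : E) : Prop :=
  Integrable (henonIntegrand α p γ u x) μ ∧ u x = ∫ y, henonIntegrand α p γ u x y ∂μ

section Integrand

variable {E : Type*} [SeminormedAddCommGroup E] {α p γ : ℝ} {u : E → ℝ} {x y : E}

lemma henonIntegrand_nonneg (hu : ∀ y, 0 ≤ u y) : 0 ≤ henonIntegrand α p γ u x y := by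
  unfold henonIntegrand; have := hu y; positivity

lemma div_rpow_le_henonIntegrand {c R D : ℝ} (hα : α ≤ 0) (hp : 0 ≤ p) (hγ : 0 ≤ γ)
    (hc : 0 ≤ c) (hcy : c ≤ u y) (hy : 0 < ‖y‖) (hyR : ‖y‖ ≤ R) (hxy : 0 < ‖x - y‖)
    (hxyD : ‖x - y‖ ≤ D) :
    R ^ α * c ^ p / D ^ γ ≤ henonIntegrand α p γ u x y := by
  have hu0 : 0 ≤ u y := hc.trans hcy
  have hyα : R ^ α ≤ ‖y‖ ^ α := Real.rpow_le_rpow_of_nonpos hy hyR hα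
  have hup : c ^ p ≤ u y ^ p := Real.rpow_le_rpow hc hcy hp
  have hxyγ : ‖x - y‖ ^ γ ≤ D ^ γ := Real.rpow_le_rpow hxy.le hxyD hγ
  exact div_le_div₀ (by positivity) (mul_le_mul hyα hup (by positivity) (by positivity))
    (by positivity) hxyγ

lemma SolvesHenonAt.setIntegral_le [MeasurableSpace E] {μ : Measure E}
    (h : SolvesHenonAt μ α p γ u x) (hu : ∀ y, 0 ≤ u y) (s : Set E) :
    ∫ y in s, henonIntegrand α p γ u x y ∂μ ≤ u x :=
  h.2 ▸ setIntegral_le_integral h.1 (Eventually.of_forall fun _ => henonIntegrand_nonneg hu)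

end Integrand

lemma mul_measureReal_le_setIntegral_of_ae {X : Type*} [MeasurableSpace X] {μ : Measure X}
    {f : X → ℝ} {s : Set X} {c : ℝ} (hs : MeasurableSet s) (hμs : μ s ≠ ⊤)
    (hf : IntegrableOn f s μ) (h : ∀ᵐ x ∂μ, x ∈ s → c ≤ f x) :
    c * μ.real s ≤ ∫ x in s, f x ∂μ := by
  rw [mul_comm, ← smul_eq_mul, ← setIntegral_const]
  exact setIntegral_mono_on_ae (integrableOn_const hμs) hf hs h

lemma exists_measure_setOf_le_inter_closedBall_ne_zero {X : Type*} [PseudoMetricSpace X]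
    [MeasurableSpace X] {μ : Measure X} {u : X → ℝ} (hu : ∀ y, 0 ≤ u y) (hne : ¬ u =ᵐ[μ] 0)
    (z : X) : ∃ δ > 0, ∃ R > 0, μ ({y | δ ≤ u y} ∩ closedBall z R) ≠ 0 := by
  by_contra! h
  refine hne (ae_iff.2 (measure_mono_null ?_ (measure_iUnion_null fun n : ℕ =>
    measure_iUnion_null fun m : ℕ =>
      h (1 / (n + 1)) Nat.one_div_pos_of_nat (m + 1) m.cast_add_one_pos)))
  intro y hy
  obtain ⟨n, hn⟩ := exists_nat_one_div_lt ((hu y).lt_of_ne' hy)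
  obtain ⟨m, hm⟩ := exists_nat_ge (dist y z)
  exact mem_iUnion₂.2 ⟨n, m, hn.le, by simp only [mem_closedBall]; linarith⟩

variable {E : Type*} [NormedAddCommGroup E] [NormedSpace ℝ E] [FiniteDimensional ℝ E]
  [MeasurableSpace E] [BorelSpace E] {μ : Measure E} [μ.IsAddHaarMeasure]
  {α p γ : ℝ} {u : E → ℝ}

lemma measureReal_norm_preimage_Ioc_half {T : ℝ} (hT : 0 ≤ T) :
    μ.real (norm ⁻¹' Ioc (T / 2) T) =
      (1 - 2⁻¹ ^ finrank ℝ E) * μ.real (ball (0 : E) 1) * T ^ finrank ℝ E := by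
  have hshell : norm ⁻¹' Ioc (T / 2) T = closedBall (0 : E) T \ closedBall 0 (T / 2) := by
    ext y; simp [and_comm]
  rw [hshell, measureReal_sdiff (closedBall_subset_closedBall (by linarith))
    measurableSet_closedBall measure_closedBall_lt_top.ne,
    Measure.addHaar_real_closedBall μ _ hT, Measure.addHaar_real_closedBall μ _ (by linarith),
    div_pow, inv_pow]
  ring

lemma le_setIntegral_norm_preimage_Ioc_half {c T : ℝ} {x : E} (hα : α ≤ 0) (hp : 0 ≤ p)
    (hγ : 0 ≤ γ) (hαγ : α + finrank ℝ E ≤ γ) (hc0 : 0 < c) (hc : ∀ᵐ y ∂μ, ‖y‖ ≤ 1 → c ≤ u y)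
    (hT0 : 0 < T) (hT1 : T ≤ 1) (hx : ‖x‖ ≤ T / 2)
    (hint : IntegrableOn (henonIntegrand α p γ u x) (norm ⁻¹' Ioc (T / 2) T) μ) :
    c ^ p * (1 - 2⁻¹ ^ finrank ℝ E) * μ.real (ball (0 : E) 1) / 2 ^ γ ≤
      ∫ y in norm ⁻¹' Ioc (T / 2) T, henonIntegrand α p γ u x y ∂μ := by
  have hK : 0 ≤ c ^ p * (1 - 2⁻¹ ^ finrank ℝ E) * μ.real (ball (0 : E) 1) / 2 ^ γ := by
    have : 0 ≤ 1 - (2⁻¹ : ℝ) ^ finrank ℝ E := sub_nonneg.2 (pow_le_one₀ (by norm_num) (by norm_num))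
    positivity
  have hbound : ∀ᵐ y ∂μ, y ∈ norm ⁻¹' Ioc (T / 2) T →
      T ^ α * c ^ p / (2 * T) ^ γ ≤ henonIntegrand α p γ u x y := by
    filter_upwards [hc] with y hcy ⟨hyT2, hyT⟩
    have hxy : ‖y‖ - ‖x‖ ≤ ‖x - y‖ := norm_sub_rev y x ▸ norm_sub_norm_le y x
    exact div_rpow_le_henonIntegrand hα hp hγ hc0.le (hcy (hyT.trans hT1)) (by linarith) hyT
      (by linarith) ((norm_sub_le x y).trans (by linarith))
  calc c ^ p * (1 - 2⁻¹ ^ finrank ℝ E) * μ.real (ball (0 : E) 1) / 2 ^ γ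
      ≤ c ^ p * (1 - 2⁻¹ ^ finrank ℝ E) * μ.real (ball (0 : E) 1) / 2 ^ γ *
          T ^ (α + finrank ℝ E - γ) :=
        le_mul_of_one_le_right hK
          (Real.one_le_rpow_of_pos_of_le_one_of_nonpos hT0 hT1 (by linarith))
    _ = T ^ α * c ^ p / (2 * T) ^ γ * μ.real (norm ⁻¹' Ioc (T / 2) T) := by
        rw [measureReal_norm_preimage_Ioc_half hT0.le, Real.mul_rpow zero_le_two hT0.le,
          Real.rpow_sub hT0, Real.rpow_add hT0, Real.rpow_natCast]
        field_simp
    _ ≤ ∫ y in norm ⁻¹' Ioc (T / 2) T, henonIntegrand α p γ u x y ∂μ :=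
        mul_measureReal_le_setIntegral_of_ae
          (measurableSet_Ioc.preimage continuous_norm.measurable)
          (measure_ne_top_of_subset (fun _ hy => mem_closedBall_zero_iff.2 hy.2)
            measure_closedBall_lt_top.ne) hint hbound

lemma SolvesHenonAt.natCast_mul_le {c : ℝ} {x : E} (h : SolvesHenonAt μ α p γ u x) (m : ℕ)
    (hα : α ≤ 0) (hp : 0 ≤ p) (hγ : 0 ≤ γ) (hαγ : α + finrank ℝ E ≤ γ) (hu : ∀ y, 0 ≤ u y)
    (hc0 : 0 < c) (hc : ∀ᵐ y ∂μ, ‖y‖ ≤ 1 → c ≤ u y) (hx : ‖x‖ ≤ 2⁻¹ ^ m) :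
    m * (c ^ p * (1 - 2⁻¹ ^ finrank ℝ E) * μ.real (ball (0 : E) 1) / 2 ^ γ) ≤ u x := by
  set shell : ℕ → Set E := fun k => norm ⁻¹' Ioc (2⁻¹ ^ (k + 1)) (2⁻¹ ^ k)
  have hshell : ∀ k, shell k = norm ⁻¹' Ioc (2⁻¹ ^ k / 2) (2⁻¹ ^ k) := fun k => by
    simp only [shell, pow_succ, div_eq_mul_inv]
  have hdisj : Pairwise (Function.onFun Disjoint shell) :=
    ((pow_right_anti₀ (by norm_num) (by norm_num) : Antitone fun k : ℕ => (2⁻¹ : ℝ) ^ k)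
      |>.pairwise_disjoint_on_Ioc_succ).mono fun _ _ h => h.preimage _
  calc (m : ℝ) * (c ^ p * (1 - 2⁻¹ ^ finrank ℝ E) * μ.real (ball (0 : E) 1) / 2 ^ γ)
      = ∑ _k ∈ Finset.range m,
          c ^ p * (1 - 2⁻¹ ^ finrank ℝ E) * μ.real (ball (0 : E) 1) / 2 ^ γ := by simp
    _ ≤ ∑ k ∈ Finset.range m, ∫ y in shell k, henonIntegrand α p γ u x y ∂μ := by
        refine Finset.sum_le_sum fun k hk => hshell k ▸ ?_
        have hkm : 2⁻¹ ^ m ≤ (2⁻¹ : ℝ) ^ (k + 1) :=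
          pow_le_pow_of_le_one (by norm_num) (by norm_num) (Finset.mem_range.1 hk)
        exact le_setIntegral_norm_preimage_Ioc_half hα hp hγ hαγ hc0 hc (by positivity)
          (pow_le_one₀ (by norm_num) (by norm_num)) (by rw [pow_succ] at hkm; linarith)
          h.1.integrableOn
    _ = ∫ y in ⋃ k ∈ Finset.range m, shell k, henonIntegrand α p γ u x y ∂μ :=
        (integral_biUnion_finset _
          (fun _ _ => measurableSet_Ioc.preimage continuous_norm.measurable) (hdisj.set_pairwise _)
          fun _ _ => h.1.integrableOn).symm
    _ ≤ u x := h.setIntegral_le hu _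

variable [Nontrivial E]

lemma exists_pos_le_of_ae_solvesHenonAt (hα : α ≤ 0) (hp : 0 ≤ p) (hγ : 0 ≤ γ)
    (hu : ∀ y, 0 ≤ u y) (hmeas : Measurable u) (hne : ¬ u =ᵐ[μ] 0)
    (hsol : ∀ᵐ x ∂μ, SolvesHenonAt μ α p γ u x) :
    ∃ c > 0, ∀ᵐ x ∂μ, ‖x‖ ≤ 1 → c ≤ u x := by
  obtain ⟨δ, hδ, R, hR, hA⟩ := exists_measure_setOf_le_inter_closedBall_ne_zero hu hne (0 : E)
  set A := {y | δ ≤ u y} ∩ closedBall (0 : E) R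
  have hAmeas : MeasurableSet A :=
    (measurableSet_le measurable_const hmeas).inter measurableSet_closedBall
  have hAfin : μ A ≠ ⊤ :=
    measure_ne_top_of_subset inter_subset_right measure_closedBall_lt_top.ne
  have hApos : 0 < μ.real A := ENNReal.toReal_pos hA hAfin
  refine ⟨R ^ α * δ ^ p / (1 + R) ^ γ * μ.real A, by positivity, ?_⟩
  filter_upwards [hsol] with x hx hx1
  refine (mul_measureReal_le_setIntegral_of_ae hAmeas hAfin hx.1.integrableOn ?_).trans
    (hx.setIntegral_le hu A)
  filter_upwards [μ.ae_ne 0, μ.ae_ne x] with y hy0 hyx ⟨hδy, hyR⟩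
  rw [mem_closedBall_zero_iff] at hyR
  exact div_rpow_le_henonIntegrand hα hp hγ hδ.le hδy (norm_pos_iff.2 hy0) hyR
    (norm_sub_pos_iff.2 hyx.symm) ((norm_sub_le x y).trans (by linarith))

theorem not_ae_solvesHenonAt (hα : α ≤ 0) (hp : 0 ≤ p) (hγ : 0 ≤ γ)
    (hαγ : α + finrank ℝ E ≤ γ) (hmeas : Measurable u) (hu : ∀ y, 0 ≤ u y)
    (hbdd : BddAbove (u '' closedBall 0 1)) (hne : ¬ u =ᵐ[μ] 0) :
    ¬ ∀ᵐ x ∂μ, SolvesHenonAt μ α p γ u x := by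
  intro hsol
  obtain ⟨c, hc0, hc⟩ := exists_pos_le_of_ae_solvesHenonAt hα hp hγ hu hmeas hne hsol
  obtain ⟨C, hC⟩ := hbdd
  set K := c ^ p * (1 - 2⁻¹ ^ finrank ℝ E) * μ.real (ball (0 : E) 1) / 2 ^ γ
  have hK : 0 < K := by
    have : 0 < 1 - (2⁻¹ : ℝ) ^ finrank ℝ E :=
      sub_pos.2 (pow_lt_one₀ (by norm_num) (by norm_num) finrank_pos.ne')
    have : 0 < μ.real (ball (0 : E) 1) :=
      ENNReal.toReal_pos (measure_ball_pos μ 0 one_pos).ne' measure_ball_lt_top.ne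
    positivity
  obtain ⟨m, hm⟩ := exists_nat_gt (C / K)
  obtain ⟨x, hx, hxsol⟩ := Measure.exists_mem_of_measure_ne_zero_of_ae
    (measure_closedBall_pos μ (0 : E) (by positivity : (0 : ℝ) < 2⁻¹ ^ m)).ne'
    (ae_restrict_of_ae hsol)
  rw [mem_closedBall_zero_iff] at hx
  have hCx : u x ≤ C := hC (mem_image_of_mem u (mem_closedBall_zero_iff.2
    (hx.trans (pow_le_one₀ (by norm_num) (by norm_num)))))
  have hmK : m * K ≤ u x := hxsol.natCast_mul_le m hα hp hγ hαγ hu hc0 hc hx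
  rw [div_lt_iff₀ hK] at hm
  linarith

theorem no_solution_integral_henon_alpha_le_general
    (N : ℕ) (hN : 0 < N) (s α p : ℝ) (hs0 : 0 < s)
    (hNs : 2 * s < (N : ℝ)) (hp1 : 1 < p) (hα : α ≤ -2 * s) :
    ¬ ∃ u : EuclideanSpace ℝ (Fin N) → ℝ,
        Measurable u ∧
        (∀ x, 0 ≤ u x) ∧
        (∀ R : ℝ, ∃ C : ℝ, ∀ x : EuclideanSpace ℝ (Fin N), ‖x‖ ≤ R → u x ≤ C) ∧
        ¬ (∀ᵐ x : EuclideanSpace ℝ (Fin N), u x = 0) ∧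
        (∀ᵐ x : EuclideanSpace ℝ (Fin N),
          Integrable (fun y : EuclideanSpace ℝ (Fin N) =>
            ‖y‖ ^ α * u y ^ p / ‖x - y‖ ^ ((N : ℝ) - 2 * s)) ∧
          u x = ∫ y : EuclideanSpace ℝ (Fin N),
            ‖y‖ ^ α * u y ^ p / ‖x - y‖ ^ ((N : ℝ) - 2 * s)) := by
  rintro ⟨u, hmeas, hu, hbdd, hne, hsol⟩
  have : Nonempty (Fin N) := ⟨⟨0, hN⟩⟩
  obtain ⟨C, hC⟩ := hbdd 1
  exact not_ae_solvesHenonAt (by linarith) (by linarith) (by linarith)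
    (by rw [finrank_euclideanSpace_fin]; linarith) hmeas hu
    ⟨C, forall_mem_image.2 fun x hx => hC x (mem_closedBall_zero_iff.1 hx)⟩ hne hsol

/-- **Nonexistence for `α ≤ -2s`** (Remark 2.2 i)).
For `N ≥ 1`, `0 < s < 1` with `N > 2s`, `p > 1` and `α ≤ -2s`, there is no nonnegative,
locally bounded, not a.e. zero measurable function satisfying the integral Hénon equation
`u(x) = ∫ |y|^α u(y)^p |x-y|^{-(N-2s)} dy` for a.e. `x`. -/
theorem no_solution_integral_henon_alpha_le
    (N : ℕ) (hN : 0 < N) (s α p : ℝ) (hs0 : 0 < s) (hs1 : s < 1)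
    (hNs : 2 * s < (N : ℝ)) (hp1 : 1 < p) (hα : α ≤ -2 * s) :
    ¬ ∃ u : EuclideanSpace ℝ (Fin N) → ℝ,
        Measurable u ∧
        (∀ x, 0 ≤ u x) ∧
        (∀ R : ℝ, ∃ C : ℝ, ∀ x : EuclideanSpace ℝ (Fin N), ‖x‖ ≤ R → u x ≤ C) ∧
        ¬ (∀ᵐ x : EuclideanSpace ℝ (Fin N), u x = 0) ∧
        (∀ᵐ x : EuclideanSpace ℝ (Fin N),
          Integrable (fun y : EuclideanSpace ℝ (Fin N) =>
            ‖y‖ ^ α * u y ^ p / ‖x - y‖ ^ ((N : ℝ) - 2 * s)) ∧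
          u x = ∫ y : EuclideanSpace ℝ (Fin N),
            ‖y‖ ^ α * u y ^ p / ‖x - y‖ ^ ((N : ℝ) - 2 * s)) :=
  no_solution_integral_henon_alpha_le_general N hN s α p hs0 hNs hp1 hα
end

section
/- Let N be a positive integer, 0 < s < 1 with N > 2s, α > -2s and p > 1. Let u : ℝ^N → [0,∞) be measurable, locally bounded, not almost everywhere equal to zero, and satisfy u(x) = ∫_{ℝ^N} |y|^α u(y)^p |x-y|^{-(N-2s)} dy for every x ∈ ℝ^N. Then there exists a constant C₀ > 0 such that u(x) ≥ C₀ |x|^{-(N-2s)} for every x with |x| ≥ 2. -/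
/-!
Let `g(y) = |y|^α u(y)^p`. Taking the equation at `x = 0`, `g(y) |y|^{-(N-2s)}` is integrable,
so `g` is integrable on every ball, and since `u ≢ 0` some ball `B_R` carries positive mass
`I = ∫_{B_R} g`. For `|x| ≥ 2` and `y ∈ B_R` we have `|x - y| ≤ (1 + R/2) |x|`, hence
`u(x) ≥ ∫_{B_R} g(y) |x - y|^{-(N-2s)} dy ≥ I ((1 + R/2) |x|)^{-(N-2s)}`.
-/

open MeasureTheory Filter Set Metric

theorem norm_sub_le_mul_norm_of_norm_le {E : Type*} [SeminormedAddCommGroup E] {x y : E} {R : ℝ}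
    (hy : ‖y‖ ≤ R) (hx : 2 ≤ ‖x‖) : ‖x - y‖ ≤ (1 + R / 2) * ‖x‖ := by
  nlinarith [norm_sub_le x y, norm_nonneg y]

section

variable {E : Type*} [NormedAddCommGroup E] [MeasurableSpace E] {μ : Measure E}

theorem exists_nat_measure_inter_closedBall_ne_zero {s : Set E} (x : E) (hs : μ s ≠ 0) :
    ∃ n : ℕ, μ (s ∩ closedBall x n) ≠ 0 := by
  by_contra! h
  rw [← inter_univ s, ← iUnion_closedBall_nat x, inter_iUnion] at hs
  exact hs (measure_iUnion_null h)

theorem exists_setIntegral_closedBall_pos {g : E → ℝ} (x : E) (hg : 0 ≤ g)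
    (hloc : ∀ R, IntegrableOn g (closedBall x R) μ) (hne : ¬ g =ᵐ[μ] 0) :
    ∃ R : ℝ, 0 ≤ R ∧ 0 < ∫ y in closedBall x R, g y ∂μ := by
  have hsupp : μ (Function.support g) ≠ 0 := fun h => hne (ae_iff.2 h)
  obtain ⟨n, hn⟩ := exists_nat_measure_inter_closedBall_ne_zero x hsupp
  refine ⟨n, n.cast_nonneg, ?_⟩
  rw [setIntegral_pos_iff_support_of_nonneg_ae (.of_forall hg) (hloc n)]
  exact pos_iff_ne_zero.2 hn

variable [NullSingletonClass μ]

theorem integrableOn_closedBall_of_integrable_div_norm_sub_rpow [OpensMeasurableSpace E]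
    {g : E → ℝ} {x : E} {m : ℝ} (hg : AEStronglyMeasurable g μ) (hm : 0 ≤ m)
    (hint : Integrable (fun y => g y / ‖x - y‖ ^ m) μ) (R : ℝ) :
    IntegrableOn g (closedBall x R) μ := by
  refine (hint.norm.restrict.const_mul (R ^ m)).mono' hg.restrict ?_
  filter_upwards [ae_restrict_of_ae (Measure.ae_ne μ x), ae_restrict_mem measurableSet_closedBall]
    with y hyx hyR
  have hpos : 0 < ‖x - y‖ ^ m := Real.rpow_pos_of_pos (norm_pos_iff.2 (sub_ne_zero.2 hyx.symm)) m
  have hle : ‖x - y‖ ^ m ≤ R ^ m :=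
    Real.rpow_le_rpow (norm_nonneg _) (by rwa [mem_closedBall, dist_comm, dist_eq_norm] at hyR) hm
  rw [norm_div, Real.norm_of_nonneg hpos.le, mul_div_assoc', le_div_iff₀ hpos, mul_comm (R ^ m)]
  exact mul_le_mul_of_nonneg_left hle (norm_nonneg _)

theorem setIntegral_div_rpow_le_integral_div_norm_sub_rpow {g : E → ℝ} {S : Set E} {x : E}
    {D m : ℝ} (hg : 0 ≤ g) (hS : MeasurableSet S) (hgS : IntegrableOn g S μ)
    (hD : ∀ y ∈ S, ‖x - y‖ ≤ D) (hm : 0 ≤ m)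
    (hint : Integrable (fun y => g y / ‖x - y‖ ^ m) μ) :
    (∫ y in S, g y ∂μ) / D ^ m ≤ ∫ y, g y / ‖x - y‖ ^ m ∂μ := by
  have hkernel : ∀ᵐ y ∂μ.restrict S, g y / D ^ m ≤ g y / ‖x - y‖ ^ m := by
    filter_upwards [ae_restrict_of_ae (Measure.ae_ne μ x), ae_restrict_mem hS] with y hyx hyS
    have hpos : 0 < ‖x - y‖ := norm_pos_iff.2 (sub_ne_zero.2 hyx.symm)
    exact div_le_div_of_nonneg_left (hg y) (Real.rpow_pos_of_pos hpos m)
      (Real.rpow_le_rpow hpos.le (hD y hyS) hm)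
  calc (∫ y in S, g y ∂μ) / D ^ m = ∫ y in S, g y / D ^ m ∂μ := (integral_div _ _).symm
    _ ≤ ∫ y in S, g y / ‖x - y‖ ^ m ∂μ :=
      setIntegral_mono_ae_restrict (hgS.div_const _) hint.integrableOn hkernel
    _ ≤ ∫ y, g y / ‖x - y‖ ^ m ∂μ :=
      setIntegral_le_integral hint (.of_forall fun y => div_nonneg (hg y) (by positivity))

theorem norm_rpow_mul_rpow_not_ae_eq_zero {u : E → ℝ} {α p : ℝ} (hu : 0 ≤ u)
    (hne : ¬ u =ᵐ[μ] 0) : ¬ (fun y => ‖y‖ ^ α * u y ^ p) =ᵐ[μ] 0 := by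
  refine fun h => hne ?_
  filter_upwards [h, Measure.ae_ne μ 0] with y hy hy0
  by_contra hu0
  have hupos : 0 < u y := lt_of_le_of_ne (hu y) (Ne.symm hu0)
  exact (mul_pos (Real.rpow_pos_of_pos (norm_pos_iff.2 hy0) α)
    (Real.rpow_pos_of_pos hupos p)).ne' hy

end

theorem integral_henon_lower_bound_general
    (N : ℕ) (hN : 0 < N) (s α p : ℝ)
    (hNs : 2 * s < (N : ℝ))
    (u : EuclideanSpace ℝ (Fin N) → ℝ)
    (hmeas : Measurable u)
    (hpos : ∀ x, 0 ≤ u x)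
    (hne : ¬ (∀ᵐ x : EuclideanSpace ℝ (Fin N), u x = 0))
    (hint : ∀ x : EuclideanSpace ℝ (Fin N),
      Integrable (fun y : EuclideanSpace ℝ (Fin N) =>
        ‖y‖ ^ α * u y ^ p / ‖x - y‖ ^ ((N : ℝ) - 2 * s)))
    (heq : ∀ x : EuclideanSpace ℝ (Fin N),
      u x = ∫ y : EuclideanSpace ℝ (Fin N),
        ‖y‖ ^ α * u y ^ p / ‖x - y‖ ^ ((N : ℝ) - 2 * s)) :
    ∃ C₀ : ℝ, 0 < C₀ ∧ ∀ x : EuclideanSpace ℝ (Fin N), 2 ≤ ‖x‖ →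
      C₀ * ‖x‖ ^ (-((N : ℝ) - 2 * s)) ≤ u x := by
  have : Nonempty (Fin N) := ⟨⟨0, hN⟩⟩
  set m : ℝ := (N : ℝ) - 2 * s
  have hm : 0 ≤ m := by linarith
  set g : EuclideanSpace ℝ (Fin N) → ℝ := fun y => ‖y‖ ^ α * u y ^ p
  have hg : 0 ≤ g := fun y => mul_nonneg (by positivity) (Real.rpow_nonneg (hpos y) p)
  have hloc := integrableOn_closedBall_of_integrable_div_norm_sub_rpow
    (by fun_prop : Measurable g).aestronglyMeasurable hm (hint 0)
  obtain ⟨R, hR, hI⟩ :=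
    exists_setIntegral_closedBall_pos 0 hg hloc (norm_rpow_mul_rpow_not_ae_eq_zero hpos hne)
  refine ⟨(∫ y in closedBall 0 R, g y) / (1 + R / 2) ^ m, div_pos hI (by positivity),
    fun x hx => ?_⟩
  have hD : ∀ y ∈ closedBall (0 : EuclideanSpace ℝ (Fin N)) R, ‖x - y‖ ≤ (1 + R / 2) * ‖x‖ :=
    fun y hy => norm_sub_le_mul_norm_of_norm_le (mem_closedBall_zero_iff.1 hy) hx
  calc (∫ y in closedBall 0 R, g y) / (1 + R / 2) ^ m * ‖x‖ ^ (-m)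
      = (∫ y in closedBall 0 R, g y) / ((1 + R / 2) * ‖x‖) ^ m := by
        rw [Real.mul_rpow (by positivity) (norm_nonneg x), Real.rpow_neg (norm_nonneg x),
          div_mul_eq_div_div, div_eq_mul_inv _ (‖x‖ ^ m)]
    _ ≤ ∫ y, g y / ‖x - y‖ ^ m :=
      setIntegral_div_rpow_le_integral_div_norm_sub_rpow hg measurableSet_closedBall
        (hloc R) hD hm (hint x)
    _ = u x := (heq x).symm

/-- **Lower bound at infinity** (first step of Proposition 3.2): a nontrivial
nonnegative locally bounded solution of the integral Hénon equation satisfies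
`u(x) ≥ C₀ |x|^{-(N-2s)}` for `|x| ≥ 2`. -/
theorem integral_henon_lower_bound
    (N : ℕ) (hN : 0 < N) (s α p : ℝ) (hs0 : 0 < s) (hs1 : s < 1)
    (hNs : 2 * s < (N : ℝ)) (hα : -2 * s < α) (hp1 : 1 < p)
    (u : EuclideanSpace ℝ (Fin N) → ℝ)
    (hmeas : Measurable u)
    (hpos : ∀ x, 0 ≤ u x)
    (hlocbd : ∀ R : ℝ, ∃ C : ℝ, ∀ x : EuclideanSpace ℝ (Fin N), ‖x‖ ≤ R → u x ≤ C)
    (hne : ¬ (∀ᵐ x : EuclideanSpace ℝ (Fin N), u x = 0))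
    (hint : ∀ x : EuclideanSpace ℝ (Fin N),
      Integrable (fun y : EuclideanSpace ℝ (Fin N) =>
        ‖y‖ ^ α * u y ^ p / ‖x - y‖ ^ ((N : ℝ) - 2 * s)))
    (heq : ∀ x : EuclideanSpace ℝ (Fin N),
      u x = ∫ y : EuclideanSpace ℝ (Fin N),
        ‖y‖ ^ α * u y ^ p / ‖x - y‖ ^ ((N : ℝ) - 2 * s)) :
    ∃ C₀ : ℝ, 0 < C₀ ∧ ∀ x : EuclideanSpace ℝ (Fin N), 2 ≤ ‖x‖ →
      C₀ * ‖x‖ ^ (-((N : ℝ) - 2 * s)) ≤ u x :=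
  integral_henon_lower_bound_general N hN s α p hNs u hmeas hpos hne hint heq
end

section
/- Let N be a positive integer, 0 < s < 1 with N > 2s, α > -2s and 1 < p < (N + 2α + 2s)/(N - 2s). Let u be an admissible positive solution of the Hénon equation. Then it is NOT the case that for every λ > 0 and every x with 0 < |x| < λ one has u_λ(x) ≥ u(x); that is, there exist λ > 0 and x with 0 < |x| < λ such that u_λ(x) < u(x). -/
open MeasureTheory Filter Set

/-- The principal-value fractional Laplacian: `IsFracLapAt N s u x L` means that
`lim_{ε→0⁺} ∫_{|y-x|>ε} (u(x)-u(y))/|x-y|^{N+2s} dy` exists and equals `L`. -/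
def IsFracLapAt (N : ℕ) (s : ℝ) (u : EuclideanSpace ℝ (Fin N) → ℝ)
    (x : EuclideanSpace ℝ (Fin N)) (L : ℝ) : Prop :=
  Filter.Tendsto (fun ε : ℝ =>
      ∫ y in {y : EuclideanSpace ℝ (Fin N) | ε < ‖y - x‖},
        (u x - u y) / ‖x - y‖ ^ ((N : ℝ) + 2 * s))
    (nhdsWithin 0 (Set.Ioi 0)) (nhds L)

/-- The Kelvin transform `u_λ(x) = (λ/|x|)^{N-2s} u(λ²x/|x|²)`. -/
noncomputable def kelvinTransform (N : ℕ) (s lam : ℝ)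
    (u : EuclideanSpace ℝ (Fin N) → ℝ) (x : EuclideanSpace ℝ (Fin N)) : ℝ :=
  (lam / ‖x‖) ^ ((N : ℝ) - 2 * s) * u ((lam ^ 2 / ‖x‖ ^ 2) • x)

/-- `u` is `C^{1,1}` on a neighbourhood of `x`. -/
def C11Near (N : ℕ) (u : EuclideanSpace ℝ (Fin N) → ℝ)
    (x : EuclideanSpace ℝ (Fin N)) : Prop :=
  ∃ ε > 0, ContDiffOn ℝ 1 u (Metric.ball x ε) ∧
    ∃ K : NNReal, LipschitzOnWith K (fderiv ℝ u) (Metric.ball x ε)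

/-- `u` is an admissible positive solution of the Hénon equation
`(-Δ)^s u = |x|^α u^p`: it is positive, continuous, locally bounded, lies in `L_{2s}`,
is `C^{1,1}` near every point of `ℝ^N \ {0}`, solves the equation pointwise away from
the origin and satisfies the equivalent integral equation. -/
def AdmissiblePositiveSolution (N : ℕ) (s α p : ℝ)
    (u : EuclideanSpace ℝ (Fin N) → ℝ) : Prop :=
  Continuous u ∧ (∀ x, 0 < u x) ∧
  (∀ R : ℝ, ∃ C : ℝ, ∀ x : EuclideanSpace ℝ (Fin N), ‖x‖ ≤ R → u x ≤ C) ∧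
  Integrable (fun y : EuclideanSpace ℝ (Fin N) =>
    |u y| / (1 + ‖y‖ ^ ((N : ℝ) + 2 * s))) ∧
  (∀ x : EuclideanSpace ℝ (Fin N), x ≠ 0 → C11Near N u x) ∧
  (∀ x : EuclideanSpace ℝ (Fin N), x ≠ 0 →
    ∃ L : ℝ, IsFracLapAt N s u x L ∧ L = ‖x‖ ^ α * u x ^ p) ∧
  (∀ x : EuclideanSpace ℝ (Fin N),
    Integrable (fun y : EuclideanSpace ℝ (Fin N) =>
      ‖y‖ ^ α * u y ^ p / ‖x - y‖ ^ ((N : ℝ) - 2 * s)) ∧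
    u x = ∫ y : EuclideanSpace ℝ (Fin N),
      ‖y‖ ^ α * u y ^ p / ‖x - y‖ ^ ((N : ℝ) - 2 * s))

/-!
If `u ≤ u_λ` on `B_λ \ {0}` for every `λ`, comparing `u` on the unit sphere with `u` on the
sphere of radius `λ²` gives `u(y) ≳ |y|^{-(N-2s)/2}` for `|y| ≥ 1`. Feeding a lower bound
`u ≳ |y|^β` into the integral equation, integrated over a ball of radius `T/2` at distance `3T`
from the origin, gives `u(x) ≳ T^{pβ+α+2s}` whenever `|x| ≤ T`. The exponent map
`β ↦ pβ + α + 2s` has slope `p > 1`, and subcriticality of `p` puts the initial exponent above its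
fixed point `-(α+2s)/(p-1)`, so after finitely many steps `pβ + α + 2s > 0`; the bound at `x = 0`
then reads `u(0) ≳ T^{pβ+α+2s}` for all `T ≥ 1`, which is absurd.
-/

open Module

lemma mul_min_rpow_le_rpow {a b T x : ℝ} (ha : 0 < a) (hT : 0 < T) (hax : a * T ≤ x)
    (hxb : x ≤ b * T) (β : ℝ) : T ^ β * min (a ^ β) (b ^ β) ≤ x ^ β := by
  have ha' : a ≤ x / T := (le_div_iff₀ hT).2 hax
  have hb' : x / T ≤ b := (div_le_iff₀ hT).2 hxb
  have hmin : min (a ^ β) (b ^ β) ≤ (x / T) ^ β := by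
    rcases le_total 0 β with hβ | hβ
    · exact (min_le_left _ _).trans (Real.rpow_le_rpow ha.le ha' hβ)
    · exact (min_le_right _ _).trans (Real.rpow_le_rpow_of_nonpos (ha.trans_le ha') hb' hβ)
  calc T ^ β * min (a ^ β) (b ^ β) ≤ T ^ β * (x / T) ^ β := by gcongr
    _ = x ^ β := by
      rw [← Real.mul_rpow hT.le (ha.le.trans ha'), mul_div_cancel₀ _ hT.ne']

section RpowLowerBound

variable {E : Type*} [NormedAddCommGroup E]

def HasRpowLowerBound (g : E → ℝ) (β : ℝ) : Prop :=
  ∃ c > 0, ∀ y : E, 1 ≤ ‖y‖ → c * ‖y‖ ^ β ≤ g y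

def SolvesHenonIntegralEq [MeasurableSpace E] (μ : Measure E) (ν α p : ℝ) (u : E → ℝ) : Prop :=
  ∀ x, Integrable (fun y => ‖y‖ ^ α * u y ^ p / ‖x - y‖ ^ ν) μ ∧
    u x = ∫ y, ‖y‖ ^ α * u y ^ p / ‖x - y‖ ^ ν ∂μ

lemma HasRpowLowerBound.norm_rpow_mul_rpow {u : E → ℝ} {β : ℝ} (hu : HasRpowLowerBound u β)
    (α : ℝ) {p : ℝ} (hp : 0 ≤ p) :
    HasRpowLowerBound (fun y => ‖y‖ ^ α * u y ^ p) (α + p * β) := by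
  obtain ⟨c, hc, hcu⟩ := hu
  refine ⟨c ^ p, by positivity, fun y hy => ?_⟩
  have hy0 : 0 < ‖y‖ := one_pos.trans_le hy
  calc c ^ p * ‖y‖ ^ (α + p * β) = ‖y‖ ^ α * (c * ‖y‖ ^ β) ^ p := by
        rw [Real.rpow_add hy0, Real.mul_rpow hc.le (by positivity), ← Real.rpow_mul hy0.le,
          mul_comm β p]
        ring
    _ ≤ ‖y‖ ^ α * u y ^ p := by gcongr; exact hcu y hy

variable [NormedSpace ℝ E]

lemma norm_bounds_of_mem_ball {e x y : E} {T : ℝ} (he : ‖e‖ = 1) (hT : 0 < T)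
    (hx : ‖x‖ ≤ T) (hy : y ∈ Metric.ball ((3 * T) • e) (T / 2)) :
    5 / 2 * T ≤ ‖y‖ ∧ ‖y‖ ≤ 7 / 2 * T ∧ 3 / 2 * T ≤ ‖x - y‖ ∧ ‖x - y‖ ≤ 9 / 2 * T := by
  have hc : ‖(3 * T) • e‖ = 3 * T := by
    rw [norm_smul, he, Real.norm_of_nonneg (by positivity), mul_one]
  have hyc : ‖y - (3 * T) • e‖ < T / 2 := mem_ball_iff_norm.1 hy
  have h₁ := norm_sub_norm_le y ((3 * T) • e)
  have h₂ := norm_sub_norm_le ((3 * T) • e) y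
  have h₃ := norm_sub_norm_le y x
  rw [norm_sub_rev] at h₂ h₃
  refine ⟨?_, ?_, ?_, ?_⟩ <;> linarith [norm_sub_le x y]

variable [FiniteDimensional ℝ E] [MeasurableSpace E] [BorelSpace E] [Nontrivial E]
  {μ : Measure E} [μ.IsAddHaarMeasure]

variable (μ) in
lemma HasRpowLowerBound.exists_le_integral_div_rpow {g : E → ℝ} {β ν : ℝ}
    (hg : HasRpowLowerBound g β) (hg0 : ∀ y, 0 ≤ g y) (hν : 0 ≤ ν) :
    ∃ K > 0, ∀ T ≥ 1, ∀ x : E, ‖x‖ ≤ T → Integrable (fun y => g y / ‖x - y‖ ^ ν) μ →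
      K * T ^ (β + finrank ℝ E - ν) ≤ ∫ y, g y / ‖x - y‖ ^ ν ∂μ := by
  obtain ⟨c, hc, hcg⟩ := hg
  obtain ⟨e, he⟩ := exists_norm_eq E zero_le_one
  set V := μ.real (Metric.ball 0 1)
  have hV : 0 < V :=
    ENNReal.toReal_pos (Metric.measure_ball_pos μ 0 one_pos).ne' measure_ball_lt_top.ne
  set m := min ((5 / 2 : ℝ) ^ β) ((7 / 2) ^ β)
  have hm : 0 < m := lt_min (by positivity) (by positivity)
  refine ⟨c * m / (9 / 2) ^ ν * ((1 / 2) ^ finrank ℝ E * V), by positivity,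
    fun T hT x hx hint => ?_⟩
  have hT0 : 0 < T := one_pos.trans_le hT
  set B := Metric.ball ((3 * T) • e) (T / 2)
  have hpt : ∀ y ∈ B, c * m / (9 / 2) ^ ν * T ^ (β - ν) ≤ g y / ‖x - y‖ ^ ν := by
    intro y hy
    obtain ⟨hy₁, hy₂, hxy₁, hxy₂⟩ := norm_bounds_of_mem_ball he hT0 hx hy
    calc c * m / (9 / 2) ^ ν * T ^ (β - ν) = c * (T ^ β * m) / (9 / 2 * T) ^ ν := by
          rw [Real.mul_rpow (by norm_num) hT0.le, Real.rpow_sub hT0]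
          field_simp
      _ ≤ c * ‖y‖ ^ β / ‖x - y‖ ^ ν := by
          gcongr
          · exact Real.rpow_pos_of_pos (by linarith) ν
          · exact mul_min_rpow_le_rpow (by norm_num) hT0 hy₁ hy₂ β
      _ ≤ g y / ‖x - y‖ ^ ν := by gcongr; exact hcg y (by linarith)
  have hvol : μ.real B = (T / 2) ^ finrank ℝ E * V := by
    simp only [B, measureReal_def, Measure.addHaar_ball_of_pos μ _ (half_pos hT0),
      ENNReal.toReal_mul, ENNReal.toReal_ofReal (by positivity : (0 : ℝ) ≤ (T / 2) ^ finrank ℝ E),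
      V]
  calc c * m / (9 / 2) ^ ν * ((1 / 2) ^ finrank ℝ E * V) * T ^ (β + finrank ℝ E - ν)
      = μ.real B • (c * m / (9 / 2) ^ ν * T ^ (β - ν)) := by
        simp only [hvol, smul_eq_mul, div_pow, one_pow, Real.rpow_sub hT0, Real.rpow_add hT0,
          Real.rpow_natCast]
        field_simp
    _ ≤ ∫ y in B, g y / ‖x - y‖ ^ ν ∂μ :=
        setIntegral_ge_of_const_le measurableSet_ball measure_ball_lt_top.ne hpt
          hint.integrableOn
    _ ≤ ∫ y, g y / ‖x - y‖ ^ ν ∂μ :=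
        setIntegral_le_integral hint
          (Eventually.of_forall fun y => div_nonneg (hg0 y) (by positivity))


namespace SolvesHenonIntegralEq

variable {ν α p β : ℝ} {u : E → ℝ}

lemma exists_rpow_le (hu : SolvesHenonIntegralEq μ ν α p u) (hu0 : ∀ x, 0 ≤ u x) (hν : 0 ≤ ν)
    (hp : 0 ≤ p) (hβ : HasRpowLowerBound u β) :
    ∃ K > 0, ∀ T ≥ 1, ∀ x : E, ‖x‖ ≤ T → K * T ^ (α + p * β + finrank ℝ E - ν) ≤ u x := by
  obtain ⟨K, hK, hle⟩ := (hβ.norm_rpow_mul_rpow α hp).exists_le_integral_div_rpow μ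
    (fun y => by have := hu0 y; positivity) hν
  exact ⟨K, hK, fun T hT x hx => (hu x).2 ▸ hle T hT x hx (hu x).1⟩

lemma hasRpowLowerBound (hu : SolvesHenonIntegralEq μ ν α p u) (hu0 : ∀ x, 0 ≤ u x) (hν : 0 ≤ ν)
    (hp : 0 ≤ p) (hβ : HasRpowLowerBound u β) :
    HasRpowLowerBound u (α + p * β + finrank ℝ E - ν) := by
  obtain ⟨K, hK, hle⟩ := hu.exists_rpow_le hu0 hν hp hβ
  exact ⟨K, hK, fun y hy => hle ‖y‖ hy y le_rfl⟩

lemma not_hasRpowLowerBound (hu : SolvesHenonIntegralEq μ ν α p u) (hu0 : ∀ x, 0 ≤ u x)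
    (hν : 0 ≤ ν) (hp : 0 ≤ p) (hγ : 0 < α + p * β + finrank ℝ E - ν) :
    ¬ HasRpowLowerBound u β := fun hβ => by
  obtain ⟨K, hK, hle⟩ := hu.exists_rpow_le hu0 hν hp hβ
  obtain ⟨T, hTu, hT⟩ := ((((tendsto_rpow_atTop hγ).const_mul_atTop hK).eventually_gt_atTop
    (u 0)).and (eventually_ge_atTop 1)).exists
  exact (hle T hT 0 (norm_zero (E := E) ▸ zero_le_one.trans hT)).not_gt hTu

end SolvesHenonIntegralEq

end RpowLowerBound

lemma tendsto_iterate_affine_atTop {p σ β₀ : ℝ} (hp : 1 < p) (hβ₀ : 0 < (p - 1) * β₀ + σ) :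
    Tendsto (fun k : ℕ => (fun β => p * β + σ)^[k] β₀) atTop atTop := by
  have hp1 : 0 < p - 1 := by linarith
  have key : ∀ k : ℕ,
      (p - 1) * (fun β => p * β + σ)^[k] β₀ + σ = p ^ k * ((p - 1) * β₀ + σ) := by
    intro k
    induction k with
    | zero => simp
    | succ k ih => rw [Function.iterate_succ_apply', pow_succ', mul_assoc, ← ih]; ring
  have hformula : (fun k : ℕ => (fun β => p * β + σ)^[k] β₀) =
      fun k => (p ^ k * ((p - 1) * β₀ + σ) + -σ) / (p - 1) := by
    funext k
    rw [← key]
    field_simp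
    ring
  rw [hformula]
  exact (tendsto_atTop_add_const_right _ _
    ((tendsto_pow_atTop_atTop_of_one_lt hp).atTop_mul_const hβ₀)).atTop_div_const hp1

lemma kelvinTransform_of_norm_eq_one {N : ℕ} {s lam : ℝ} {u : EuclideanSpace ℝ (Fin N) → ℝ}
    {x : EuclideanSpace ℝ (Fin N)} (hx : ‖x‖ = 1) :
    kelvinTransform N s lam u x = lam ^ ((N : ℝ) - 2 * s) * u (lam ^ 2 • x) := by
  simp [kelvinTransform, hx]

lemma hasRpowLowerBound_of_le_kelvinTransform {N : ℕ} (hN : 0 < N) {s : ℝ}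
    {u : EuclideanSpace ℝ (Fin N) → ℝ} (hcont : Continuous u) (hpos : ∀ x, 0 < u x)
    (H : ∀ lam : ℝ, 0 < lam → ∀ x : EuclideanSpace ℝ (Fin N), 0 < ‖x‖ → ‖x‖ < lam →
      u x ≤ kelvinTransform N s lam u x) :
    HasRpowLowerBound u (-(((N : ℝ) - 2 * s) / 2)) := by
  have : NeZero N := ⟨hN.ne'⟩
  obtain ⟨x₀, -, hmin⟩ := (isCompact_sphere (0 : EuclideanSpace ℝ (Fin N)) 1).exists_isMinOn
    (NormedSpace.sphere_nonempty.2 zero_le_one) hcont.continuousOn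
  refine ⟨u x₀, hpos x₀, fun y hy => ?_⟩
  set t := ‖y‖
  have ht : 0 < t := one_pos.trans_le hy
  have hx : ‖t⁻¹ • y‖ = 1 := by rw [norm_smul, norm_inv, norm_norm, inv_mul_cancel₀ ht.ne']
  have hsphere : u x₀ ≤ u (t⁻¹ • y) := hmin (mem_sphere_zero_iff_norm.2 hx)
  -- The Kelvin transform with `λ = √t` maps the unit sphere onto the sphere of radius `t`.
  have hkelvin : u (t⁻¹ • y) ≤ t ^ (((N : ℝ) - 2 * s) / 2) * u y := by
    rcases hy.eq_or_lt with h1 | h1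
    · simp [← h1]
    · have h := H √t (by positivity) _ (by rw [hx]; norm_num)
        (by rw [hx, Real.lt_sqrt zero_le_one]; simpa using h1)
      rwa [kelvinTransform_of_norm_eq_one hx, Real.sq_sqrt ht.le, smul_smul,
        mul_inv_cancel₀ ht.ne', one_smul, Real.sqrt_eq_rpow, ← Real.rpow_mul ht.le,
        one_div_mul_eq_div] at h
  rw [Real.rpow_neg ht.le, ← div_eq_mul_inv, div_le_iff₀ (by positivity), mul_comm]
  exact hsphere.trans hkelvin

theorem moving_spheres_not_all_lambda_general
    (N : ℕ) (hN : 0 < N) (s α p : ℝ)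
    (hNs : 2 * s < (N : ℝ)) (hp1 : 1 < p)
    (hp2 : p < ((N : ℝ) + 2 * α + 2 * s) / ((N : ℝ) - 2 * s))
    (u : EuclideanSpace ℝ (Fin N) → ℝ)
    (hu : AdmissiblePositiveSolution N s α p u) :
    ¬ (∀ lam : ℝ, 0 < lam →
        ∀ x : EuclideanSpace ℝ (Fin N), 0 < ‖x‖ → ‖x‖ < lam →
          u x ≤ kelvinTransform N s lam u x) := by
  intro H
  obtain ⟨hcont, hpos, -, -, -, -,
    (hsol : SolvesHenonIntegralEq volume ((N : ℝ) - 2 * s) α p u)⟩ := hu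
  have : NeZero N := ⟨hN.ne'⟩
  have hu0 : ∀ x, 0 ≤ u x := fun x => (hpos x).le
  have hν : (0 : ℝ) ≤ N - 2 * s := by linarith
  have hexp : ∀ β, α + p * β + finrank ℝ (EuclideanSpace ℝ (Fin N)) - ((N : ℝ) - 2 * s) =
      p * β + (α + 2 * s) := fun β => by rw [finrank_euclideanSpace_fin]; ring
  have hstep (β : ℝ) (hβ : HasRpowLowerBound u β) : HasRpowLowerBound u (p * β + (α + 2 * s)) :=
    hexp β ▸ hsol.hasRpowLowerBound hu0 hν (by linarith) hβ
  have hsubcritical : 0 < (p - 1) * (-(((N : ℝ) - 2 * s) / 2)) + (α + 2 * s) := by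
    have := (lt_div_iff₀ (by linarith)).1 hp2
    linarith
  obtain ⟨k, hk⟩ := ((tendsto_iterate_affine_atTop hp1 hsubcritical).eventually_gt_atTop
    0).exists_forall_of_atTop
  have hγ := hk (k + 1) k.le_succ
  rw [Function.iterate_succ_apply', ← hexp] at hγ
  exact hsol.not_hasRpowLowerBound hu0 hν (by linarith) hγ
    (Function.Iterate.rec _ (hasRpowLowerBound_of_le_kelvinTransform hN hcont hpos H) hstep k)

/-- **The moving-spheres supremum cannot be infinite** (Proposition 3.4): it is not the
case that `u_λ ≥ u` in `B_λ \ {0}` for every `λ > 0`. -/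
theorem moving_spheres_not_all_lambda
    (N : ℕ) (hN : 0 < N) (s α p : ℝ) (hs0 : 0 < s) (hs1 : s < 1)
    (hNs : 2 * s < (N : ℝ)) (hα : -2 * s < α) (hp1 : 1 < p)
    (hp2 : p < ((N : ℝ) + 2 * α + 2 * s) / ((N : ℝ) - 2 * s))
    (u : EuclideanSpace ℝ (Fin N) → ℝ)
    (hu : AdmissiblePositiveSolution N s α p u) :
    ¬ (∀ lam : ℝ, 0 < lam →
        ∀ x : EuclideanSpace ℝ (Fin N), 0 < ‖x‖ → ‖x‖ < lam →
          u x ≤ kelvinTransform N s lam u x) :=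
  moving_spheres_not_all_lambda_general N hN s α p hNs hp1 hp2 u hu
end

section
/- Let N be a positive integer, 0 < s < 1 with N > 2s, α > -2s, and set p* = (N + 2α + 2s)/(N - 2s). Let u : ℝ^N → (0,∞) be radially symmetric, bounded, continuous on ℝ^N ∖ {0}, satisfy u(x) = ∫_{ℝ^N} |y|^α u(y)^{p*} |x-y|^{-(N-2s)} dy for every x ≠ 0, and suppose |x|^{(N-2s)/2} u(x) → 0 as |x| → ∞. Then u has fast decay: there exist constants c₁, c₂ > 0 such that c₁ |x|^{-(N-2s)} ≤ u(x) ≤ c₂ |x|^{-(N-2s)} for every x with |x| ≥ 1. -/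
open MeasureTheory Filter Set Metric
open scoped ENNReal NNReal

noncomputable section

namespace RadialFastDecay

structure HS where
  N : ℕ
  hN : 0 < N
  s : ℝ
  α : ℝ
  hs0 : 0 < s
  hNs : 2 * s < (N : ℝ)
  hα : -2 * s < α
  u : EuclideanSpace ℝ (Fin N) → ℝ
  hpos : ∀ x, 0 < u x
  hcont : ContinuousOn u {x : EuclideanSpace ℝ (Fin N) | x ≠ 0}
  hint : ∀ x : EuclideanSpace ℝ (Fin N), x ≠ 0 →
    Integrable (fun y : EuclideanSpace ℝ (Fin N) =>
      ‖y‖ ^ α * u y ^ (((N : ℝ) + 2 * α + 2 * s) / ((N : ℝ) - 2 * s))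
        / ‖x - y‖ ^ ((N : ℝ) - 2 * s))
  heq : ∀ x : EuclideanSpace ℝ (Fin N), x ≠ 0 →
    u x = ∫ y : EuclideanSpace ℝ (Fin N),
      ‖y‖ ^ α * u y ^ (((N : ℝ) + 2 * α + 2 * s) / ((N : ℝ) - 2 * s))
        / ‖x - y‖ ^ ((N : ℝ) - 2 * s)
  hdecay : Tendsto (fun x : EuclideanSpace ℝ (Fin N) =>
      ‖x‖ ^ (((N : ℝ) - 2 * s) / 2) * u x) (cocompact _) (nhds 0)

namespace HS

variable (S : HS)

abbrev E := EuclideanSpace ℝ (Fin S.N)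

def m : ℝ := (S.N : ℝ) - 2 * S.s
def p : ℝ := ((S.N : ℝ) + 2 * S.α + 2 * S.s) / ((S.N : ℝ) - 2 * S.s)
def w (y : S.E) : ℝ := ‖y‖ ^ S.α * S.u y ^ S.p
def g (x y : S.E) : ℝ := S.w y / ‖x - y‖ ^ S.m
def b : ℝ := (2 : ℝ) ^ (S.m / 2)

lemma hm : 0 < S.m := by
  have := S.hNs; unfold m; linarith

lemma hm2 : 0 < S.m / 2 := by linarith [S.hm]

lemma hmN : S.m < (S.N : ℝ) := by
  have := S.hs0; unfold m; linarith

lemma hNm : (S.N : ℝ) - S.m = 2 * S.s := by unfold m; ring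

lemma hNpos : 0 < (S.N : ℝ) := lt_trans (by linarith [S.hs0]) S.hNs

lemma hp_mul : S.p * S.m = (S.N : ℝ) + 2 * S.α + 2 * S.s := by
  have hm0 : S.m ≠ 0 := ne_of_gt S.hm
  unfold p m at *
  field_simp

lemma hp1 : 1 < S.p := by
  have hm0 : 0 < S.m := S.hm
  have h := S.hp_mul
  have hmlt : 1 * S.m < S.p * S.m := by
    rw [one_mul, h]
    have := S.hα
    unfold m
    linarith
  exact lt_of_mul_lt_mul_right hmlt hm0.le

lemma hp0 : 0 < S.p := lt_trans one_pos S.hp1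

/-- Key exponent identity: `α - p*(m/2) + N = m/2`. -/
lemma keyexp : S.α - S.p * (S.m / 2) + S.N = S.m / 2 := by
  have h := S.hp_mul
  have : S.p * (S.m / 2) = ((S.N : ℝ) + 2 * S.α + 2 * S.s) / 2 := by
    rw [← h]; ring
  rw [this]; unfold m; ring

lemma hb1 : 1 < S.b := by
  rw [b, Real.one_lt_rpow_iff_of_pos (by norm_num)]
  exact Or.inl ⟨one_lt_two, S.hm2⟩

lemma hb0 : 0 < S.b := lt_trans one_pos S.hb1

def pt (r : ℝ) : S.E := r • (EuclideanSpace.single (⟨0, S.hN⟩ : Fin S.N) (1 : ℝ))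

lemma norm_pt (r : ℝ) (hr : 0 ≤ r) : ‖S.pt r‖ = r := by
  rw [pt, norm_smul, EuclideanSpace.norm_single]
  simp [abs_of_nonneg hr]

lemma pt_ne (r : ℝ) (hr : 0 < r) : S.pt r ≠ 0 := by
  intro h
  have := S.norm_pt r hr.le
  rw [h, norm_zero] at this
  exact absurd this.symm (ne_of_gt hr)

lemma u_nonneg (y : S.E) : 0 ≤ S.u y := (S.hpos y).le

lemma w_nonneg (y : S.E) : 0 ≤ S.w y :=
  mul_nonneg (Real.rpow_nonneg (norm_nonneg _) _) (Real.rpow_nonneg (S.u_nonneg y) _)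

lemma w_pos (y : S.E) (hy : y ≠ 0) : 0 < S.w y :=
  mul_pos (Real.rpow_pos_of_pos (norm_pos_iff.mpr hy) _)
    (Real.rpow_pos_of_pos (S.hpos y) _)

lemma g_nonneg (x y : S.E) : 0 ≤ S.g x y :=
  div_nonneg (S.w_nonneg y) (Real.rpow_nonneg (norm_nonneg _) _)

lemma int_g (x : S.E) (hx : x ≠ 0) : Integrable (S.g x) := S.hint x hx

lemma heq_g (x : S.E) (hx : x ≠ 0) : S.u x = ∫ y, S.g x y := S.heq x hx

def Lg (x : S.E) : ℝ≥0∞ := ∫⁻ y, ENNReal.ofReal (S.g x y)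

lemma u_eq_toReal (x : S.E) (hx : x ≠ 0) : S.u x = (S.Lg x).toReal := by
  rw [S.heq_g x hx]
  exact integral_eq_lintegral_of_nonneg_ae (Filter.Eventually.of_forall fun y => S.g_nonneg x y)
    (S.int_g x hx).aestronglyMeasurable

lemma Lg_lt_top (x : S.E) (hx : x ≠ 0) : S.Lg x < ⊤ := by
  have h : ∀ y, ENNReal.ofReal (S.g x y) = (‖S.g x y‖₊ : ℝ≥0∞) := fun y =>
    (Real.enorm_eq_ofReal (S.g_nonneg x y)).symm
  rw [Lg, lintegral_congr h]
  exact (S.int_g x hx).hasFiniteIntegral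

lemma ofReal_u (x : S.E) (hx : x ≠ 0) : ENNReal.ofReal (S.u x) = S.Lg x := by
  rw [S.u_eq_toReal x hx]
  exact ENNReal.ofReal_toReal (S.Lg_lt_top x hx).ne

lemma aemeas_g (x : S.E) (hx : x ≠ 0) :
    AEMeasurable (fun y => ENNReal.ofReal (S.g x y)) (volume : Measure S.E) :=
  ENNReal.measurable_ofReal.comp_aemeasurable (S.int_g x hx).aestronglyMeasurable.aemeasurable

def f (x : S.E) : ℝ := ‖x‖ ^ (S.m / 2) * S.u x

lemma f_nonneg (x : S.E) : 0 ≤ S.f x :=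
  mul_nonneg (Real.rpow_nonneg (norm_nonneg _) _) (S.u_nonneg x)

lemma hdecay_f : Tendsto S.f (cocompact S.E) (nhds 0) := S.hdecay

lemma cont_f : ContinuousOn S.f {x : S.E | 1 ≤ ‖x‖} := by
  apply ContinuousOn.mul
  · exact (continuous_norm.rpow_const fun x => Or.inr S.hm2.le).continuousOn
  · exact S.hcont.mono fun x hx => by
      simp only [mem_setOf_eq] at *
      intro h0; rw [h0, norm_zero] at hx; linarith

lemma bddAbove_f (t : ℝ) (ht : 1 ≤ t) : BddAbove (S.f '' {x : S.E | t ≤ ‖x‖}) := by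
  obtain ⟨K, hK, hKc⟩ := mem_cocompact.mp (S.hdecay_f (Metric.ball_mem_nhds (0:ℝ) one_pos))
  obtain ⟨R, hR⟩ := hK.isBounded.subset_closedBall (0 : S.E)
  set K' : Set S.E := closedBall 0 R ∩ {x : S.E | 1 ≤ ‖x‖} with hK'
  have hcomp : IsCompact K' :=
    (isCompact_closedBall _ _).inter_right (isClosed_le continuous_const continuous_norm)
  have hbd : BddAbove (S.f '' K') :=
    hcomp.bddAbove_image (S.cont_f.mono inter_subset_right)
  obtain ⟨B, hB⟩ := hbd
  refine ⟨max B 1, ?_⟩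
  rintro v ⟨x, hx, rfl⟩
  simp only [mem_setOf_eq] at hx
  by_cases hxR : ‖x‖ ≤ R
  · exact le_trans (hB ⟨x, ⟨mem_closedBall_zero_iff.mpr hxR, le_trans ht hx⟩, rfl⟩) (le_max_left _ _)
  · have hxK : x ∉ K := fun hmem => hxR (mem_closedBall_zero_iff.mp (hR hmem))
    have := hKc hxK
    simp only [mem_preimage, mem_ball, dist_zero_right, Real.norm_eq_abs] at this
    exact le_trans (le_of_lt (lt_of_le_of_lt (le_abs_self _) this)) (le_max_right _ _)

def h (t : ℝ) : ℝ := sSup (S.f '' {x : S.E | t ≤ ‖x‖})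

lemma le_h (t : ℝ) (ht : 1 ≤ t) (x : S.E) (hx : t ≤ ‖x‖) : S.f x ≤ S.h t :=
  le_csSup (S.bddAbove_f t ht) ⟨x, hx, rfl⟩

lemma h_nonneg (t : ℝ) (ht : 1 ≤ t) : 0 ≤ S.h t := by
  have h1 : t ≤ ‖S.pt t‖ := by rw [S.norm_pt t (by linarith)]
  exact le_trans (S.f_nonneg _) (S.le_h t ht _ h1)

lemma h_anti (t t' : ℝ) (ht : 1 ≤ t) (htt' : t ≤ t') : S.h t' ≤ S.h t := by
  apply csSup_le_csSup (S.bddAbove_f t ht)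
  · exact ⟨S.f (S.pt t'), ⟨S.pt t', by rw [mem_setOf_eq, S.norm_pt t' (by linarith)], rfl⟩⟩
  · exact Set.image_mono fun x hx => le_trans htt' hx

lemma u_le (t : ℝ) (ht : 1 ≤ t) (y : S.E) (hy : t ≤ ‖y‖) :
    S.u y ≤ S.h t * ‖y‖ ^ (-(S.m / 2)) := by
  have hy0 : 0 < ‖y‖ := lt_of_lt_of_le (by linarith) hy
  have hf := S.le_h t ht y hy
  rw [Real.rpow_neg (norm_nonneg _), mul_comm (S.h t), ← div_eq_inv_mul, le_div_iff₀
    (Real.rpow_pos_of_pos hy0 _), mul_comm]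
  exact hf

lemma h_small : ∀ δ : ℝ, 0 < δ → ∃ R : ℝ, 1 ≤ R ∧ S.h R ≤ δ := by
  intro δ hδ
  obtain ⟨K, hK, hKc⟩ := mem_cocompact.mp (S.hdecay_f (Metric.ball_mem_nhds (0:ℝ) hδ))
  obtain ⟨R₂, hR₂⟩ := hK.isBounded.subset_closedBall (0 : S.E)
  refine ⟨max 1 (R₂ + 1), le_max_left _ _, ?_⟩
  apply csSup_le
  · exact ⟨S.f (S.pt (max 1 (R₂ + 1))), ⟨S.pt _, by
      rw [mem_setOf_eq, S.norm_pt _ (by positivity)], rfl⟩⟩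
  · rintro v ⟨x, hx, rfl⟩
    simp only [mem_setOf_eq] at hx
    have hxK : x ∉ K := by
      intro hmem
      have h1 := mem_closedBall_zero_iff.mp (hR₂ hmem)
      have h2 : R₂ + 1 ≤ ‖x‖ := le_trans (le_max_right _ _) hx
      linarith
    have := hKc hxK
    simp only [mem_preimage, mem_ball, dist_zero_right, Real.norm_eq_abs] at this
    exact le_of_lt (lt_of_le_of_lt (le_abs_self _) this)


/-! ### Volume helpers -/

def v1 : ℝ := (volume (ball (0 : S.E) 1)).toReal

lemma v1_pos : 0 < S.v1 := by
  have h1 : (0:ℝ≥0∞) < volume (ball (0 : S.E) 1) := measure_ball_pos _ _ one_pos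
  exact ENNReal.toReal_pos h1.ne' measure_ball_lt_top.ne

lemma ofReal_v1 : ENNReal.ofReal S.v1 = volume (ball (0 : S.E) 1) :=
  ENNReal.ofReal_toReal measure_ball_lt_top.ne

lemma vol_cb (c : S.E) (R : ℝ) (hR : 0 ≤ R) :
    volume (closedBall c R) = ENNReal.ofReal (R ^ (S.N : ℝ) * S.v1) := by
  rw [Measure.addHaar_closedBall _ _ hR, finrank_euclideanSpace_fin,
    ENNReal.ofReal_mul (by positivity), ← Real.rpow_natCast R S.N, S.ofReal_v1]

lemma meas_singleton (c : S.E) : volume ({c} : Set S.E) = 0 := by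
  have h1 : ({c} : Set S.E) ⊆ closedBall c 0 := by
    intro y hy; rw [mem_singleton_iff] at hy; simp [hy]
  refine le_antisymm (le_trans (measure_mono h1) ?_) zero_le
  rw [S.vol_cb c 0 le_rfl, Real.zero_rpow (by exact_mod_cast S.hN.ne'), zero_mul,
    ENNReal.ofReal_zero]

lemma lint_union_le (f : S.E → ℝ≥0∞) (A B : Set S.E) :
    ∫⁻ y in A ∪ B, f y ≤ (∫⁻ y in A, f y) + ∫⁻ y in B, f y :=
  le_trans (lintegral_mono' (Measure.restrict_union_le _ _) (le_refl f))
    (le_of_eq (lintegral_add_measure f _ _))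

lemma setlint_le_const (f : S.E → ℝ≥0∞) (A : Set S.E) (hA : MeasurableSet A) (c : ℝ≥0∞)
    (hf : ∀ y ∈ A, f y ≤ c) : ∫⁻ y in A, f y ≤ c * volume A := by
  calc ∫⁻ y in A, f y ≤ ∫⁻ _ in A, c := setLIntegral_mono' hA hf
  _ = c * volume A := setLIntegral_const A c

/-! ### Power integral estimates (dyadic shells) -/

lemma H1 (c : S.E) (R q : ℝ) (hR : 0 < R) (hqN : 0 < q + S.N) (hq : q < 0) :
    ∫⁻ y in closedBall c R, ENNReal.ofReal (‖y - c‖ ^ q)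
      ≤ ENNReal.ofReal ((2:ℝ) ^ (-q) * S.v1 * (1 - (2:ℝ) ^ (-(q + S.N)))⁻¹ * R ^ (q + S.N)) := by
  classical
  set ρ : ℝ := (2:ℝ) ^ (-(q + S.N)) with hρdef
  have hρ0 : 0 < ρ := Real.rpow_pos_of_pos two_pos _
  have hρ1 : ρ < 1 := Real.rpow_lt_one_of_one_lt_of_neg one_lt_two (by linarith)
  set A : ℕ → Set S.E := fun i =>
    {y | R * (2⁻¹:ℝ) ^ (i+1) < ‖y - c‖ ∧ ‖y - c‖ ≤ R * (2⁻¹:ℝ) ^ i} with hAdef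
  -- coverage
  have hcover : closedBall c R ⊆ {c} ∪ ⋃ i, A i := by
    intro y hy
    by_cases hyc : y = c
    · exact Or.inl (by simp [hyc])
    · right
      have hd0 : 0 < ‖y - c‖ := norm_pos_iff.mpr (sub_ne_zero.mpr hyc)
      have hdR : ‖y - c‖ ≤ R := mem_closedBall_iff_norm.mp hy
      have hex : ∃ i : ℕ, R * (2⁻¹:ℝ) ^ (i+1) < ‖y - c‖ := by
        obtain ⟨n, hn⟩ := exists_pow_lt_of_lt_one (div_pos hd0 hR) (by norm_num : (2⁻¹:ℝ) < 1)
        refine ⟨n, ?_⟩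
        have h1 : ((2⁻¹:ℝ)) ^ (n+1) ≤ (2⁻¹:ℝ) ^ n :=
          pow_le_pow_of_le_one (by norm_num) (by norm_num) (Nat.le_succ n)
        have h2 : R * (2⁻¹:ℝ) ^ n < ‖y - c‖ := by
          rw [← lt_div_iff₀' hR]; exact hn
        exact lt_of_le_of_lt (by nlinarith) h2
      set i₀ := Nat.find hex with hi₀
      have hspec := Nat.find_spec hex
      refine mem_iUnion.mpr ⟨i₀, hspec, ?_⟩
      rcases Nat.eq_zero_or_pos i₀ with h0 | h0
      · rw [h0]; simpa using hdR
      · have hmin := Nat.find_min hex (Nat.sub_lt h0 one_pos)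
        rw [not_lt] at hmin
        have heq : Nat.find hex - 1 + 1 = i₀ := by omega
        rwa [heq] at hmin
  have hstep : ∀ i : ℕ, ∫⁻ y in A i, ENNReal.ofReal (‖y - c‖ ^ q)
      ≤ ENNReal.ofReal (((2:ℝ) ^ (-q) * S.v1 * R ^ (q + S.N)) * ρ ^ i) := by
    intro i
    set t : ℝ := (2⁻¹:ℝ) ^ i with htdef
    have ht0 : 0 < t := by positivity
    have hmeas : MeasurableSet (A i) := by
      apply MeasurableSet.inter
      · exact measurableSet_lt measurable_const ((continuous_id.sub continuous_const).norm.measurable)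
      · exact measurableSet_le ((continuous_id.sub continuous_const).norm.measurable) measurable_const
    have hsub : A i ⊆ closedBall c (R * t) := by
      intro y hy; rw [mem_closedBall_iff_norm]; exact hy.2
    have hb : ∀ y ∈ A i, ENNReal.ofReal (‖y - c‖ ^ q) ≤ ENNReal.ofReal ((R * (t * 2⁻¹)) ^ q) := by
      intro y hy
      apply ENNReal.ofReal_le_ofReal
      apply Real.rpow_le_rpow_of_nonpos (mul_pos hR (mul_pos ht0 (by norm_num))) _ hq.le
      have h1 := hy.1
      have e : R * (t * 2⁻¹) = R * (2⁻¹:ℝ) ^ (i+1) := by rw [htdef, pow_succ]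
      linarith
    calc ∫⁻ y in A i, ENNReal.ofReal (‖y - c‖ ^ q)
        ≤ ENNReal.ofReal ((R * (t * 2⁻¹)) ^ q) * volume (A i) :=
          S.setlint_le_const _ _ hmeas _ hb
      _ ≤ ENNReal.ofReal ((R * (t * 2⁻¹)) ^ q) * volume (closedBall c (R * t)) := by
          exact mul_le_mul_right (measure_mono hsub) _
      _ = ENNReal.ofReal ((R * (t * 2⁻¹)) ^ q) * ENNReal.ofReal ((R * t) ^ (S.N:ℝ) * S.v1) := by
          rw [S.vol_cb c (R * t) (by positivity)]
      _ = ENNReal.ofReal (((R * (t * 2⁻¹)) ^ q) * ((R * t) ^ (S.N:ℝ) * S.v1)) :=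
          (ENNReal.ofReal_mul (Real.rpow_nonneg (by positivity) _)).symm
      _ = ENNReal.ofReal (((2:ℝ) ^ (-q) * S.v1 * R ^ (q + S.N)) * ρ ^ i) := by
          congr 1
          have e1 : (R * (t * 2⁻¹)) ^ q = R ^ q * t ^ q * (2⁻¹:ℝ) ^ q := by
            rw [Real.mul_rpow hR.le (by positivity), Real.mul_rpow ht0.le (by norm_num)]
            ring
          have e2 : (R * t) ^ (S.N:ℝ) = R ^ (S.N:ℝ) * t ^ (S.N:ℝ) := 
            Real.mul_rpow hR.le ht0.le
          have e3 : (2⁻¹:ℝ) ^ q = ((2:ℝ) ^ q)⁻¹ := by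
            rw [Real.inv_rpow (by norm_num)]
          have e4 : ((2:ℝ) ^ q)⁻¹ = (2:ℝ) ^ (-q) := (Real.rpow_neg (by norm_num) q).symm
          have e5 : R ^ q * R ^ (S.N:ℝ) = R ^ (q + S.N) := (Real.rpow_add hR q _).symm
          have e6 : t ^ q * t ^ (S.N:ℝ) = t ^ (q + S.N) := (Real.rpow_add ht0 q _).symm
          have e7 : t ^ (q + S.N) = ρ ^ i := by
            rw [htdef, ← Real.rpow_natCast (2⁻¹:ℝ) i, ← Real.rpow_mul (by norm_num),
              mul_comm (i:ℝ), Real.rpow_mul (by norm_num), Real.rpow_natCast, hρdef]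
            congr 1
            rw [Real.inv_rpow (by norm_num), ← Real.rpow_neg (by norm_num)]
          calc (R * (t * 2⁻¹)) ^ q * ((R * t) ^ (S.N:ℝ) * S.v1)
              = (R ^ q * R ^ (S.N:ℝ)) * (t ^ q * t ^ (S.N:ℝ)) * ((2⁻¹:ℝ) ^ q * S.v1) := by
                rw [e1, e2]; ring
            _ = R ^ (q + S.N) * (ρ ^ i) * ((2:ℝ) ^ (-q) * S.v1) := by
                rw [e5, e6, e7, e3, e4]
            _ = (2:ℝ) ^ (-q) * S.v1 * R ^ (q + S.N) * ρ ^ i := by ring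
  calc ∫⁻ y in closedBall c R, ENNReal.ofReal (‖y - c‖ ^ q)
      ≤ ∫⁻ y in {c} ∪ ⋃ i, A i, ENNReal.ofReal (‖y - c‖ ^ q) := lintegral_mono_set hcover
    _ ≤ (∫⁻ y in ({c} : Set S.E), ENNReal.ofReal (‖y - c‖ ^ q))
        + ∫⁻ y in ⋃ i, A i, ENNReal.ofReal (‖y - c‖ ^ q) := S.lint_union_le _ _ _
    _ ≤ 0 + ∑' i, ∫⁻ y in A i, ENNReal.ofReal (‖y - c‖ ^ q) := by
        apply add_le_add
        · rw [Measure.restrict_eq_zero.mpr (S.meas_singleton c), lintegral_zero_measure]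
        · exact lintegral_iUnion_le _ _
    _ ≤ ∑' i, ENNReal.ofReal (((2:ℝ) ^ (-q) * S.v1 * R ^ (q + S.N)) * ρ ^ i) := by
        rw [zero_add]; exact ENNReal.tsum_le_tsum hstep
    _ = ENNReal.ofReal (∑' i : ℕ, ((2:ℝ) ^ (-q) * S.v1 * R ^ (q + S.N)) * ρ ^ i) := by
        rw [ENNReal.ofReal_tsum_of_nonneg (fun i => mul_nonneg (mul_nonneg (mul_nonneg
            (Real.rpow_nonneg (by norm_num) _) S.v1_pos.le) (Real.rpow_nonneg hR.le _))
            (pow_nonneg hρ0.le i))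
          ((summable_geometric_of_lt_one hρ0.le hρ1).mul_left _)]
    _ = ENNReal.ofReal ((2:ℝ) ^ (-q) * S.v1 * (1 - ρ)⁻¹ * R ^ (q + S.N)) := by
        rw [tsum_mul_left, tsum_geometric_of_lt_one hρ0.le hρ1]
        congr 1; ring

lemma H2 (T q : ℝ) (hT : 0 < T) (hqN : q + S.N < 0) :
    ∫⁻ y in {y : S.E | T < ‖y‖}, ENNReal.ofReal (‖y‖ ^ q)
      ≤ ENNReal.ofReal ((2:ℝ) ^ (S.N:ℝ) * S.v1 * (1 - (2:ℝ) ^ (q + S.N))⁻¹ * T ^ (q + S.N)) := by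
  classical
  set σ : ℝ := (2:ℝ) ^ (q + S.N) with hσdef
  have hσ0 : 0 < σ := Real.rpow_pos_of_pos two_pos _
  have hσ1 : σ < 1 := Real.rpow_lt_one_of_one_lt_of_neg one_lt_two hqN
  set A : ℕ → Set S.E := fun i =>
    {y | T * (2:ℝ) ^ i < ‖y‖ ∧ ‖y‖ ≤ T * (2:ℝ) ^ (i+1)} with hAdef
  have hcover : {y : S.E | T < ‖y‖} ⊆ ⋃ i, A i := by
    intro y hy
    rw [mem_setOf_eq] at hy
    have hex : ∃ i : ℕ, ‖y‖ ≤ T * (2:ℝ) ^ (i+1) := by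
      obtain ⟨n, hn⟩ := pow_unbounded_of_one_lt (‖y‖ / T) (one_lt_two (α := ℝ))
      refine ⟨n, ?_⟩
      have h1 : ‖y‖ / T < (2:ℝ) ^ n := hn
      have h2 : ((2:ℝ)) ^ n ≤ (2:ℝ) ^ (n+1) :=
        pow_le_pow_right₀ one_le_two (Nat.le_succ n)
      rw [div_lt_iff₀ hT] at h1
      nlinarith
    set i₀ := Nat.find hex with hi₀
    have hspec := Nat.find_spec hex
    refine mem_iUnion.mpr ⟨i₀, ?_, hspec⟩
    rcases Nat.eq_zero_or_pos i₀ with h0 | h0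
    · rw [h0]; simpa using hy
    · have hmin := Nat.find_min hex (Nat.sub_lt h0 one_pos)
      rw [not_le] at hmin
      have heq : Nat.find hex - 1 + 1 = i₀ := by omega
      rwa [heq] at hmin
  have hstep : ∀ i : ℕ, ∫⁻ y in A i, ENNReal.ofReal (‖y‖ ^ q)
      ≤ ENNReal.ofReal (((2:ℝ) ^ (S.N:ℝ) * S.v1 * T ^ (q + S.N)) * σ ^ i) := by
    intro i
    set t : ℝ := (2:ℝ) ^ i with htdef
    have ht0 : 0 < t := by positivity
    have hmeas : MeasurableSet (A i) := by
      apply MeasurableSet.inter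
      · exact measurableSet_lt measurable_const continuous_norm.measurable
      · exact measurableSet_le continuous_norm.measurable measurable_const
    have hsub : A i ⊆ closedBall 0 (T * (t * 2)) := by
      intro y hy
      rw [mem_closedBall_zero_iff]
      have := hy.2
      calc ‖y‖ ≤ T * (2:ℝ)^(i+1) := this
      _ = T * (t * 2) := by rw [pow_succ]
    have hq : q < 0 := by have := S.hNpos; linarith
    have hb : ∀ y ∈ A i, ENNReal.ofReal (‖y‖ ^ q) ≤ ENNReal.ofReal ((T * t) ^ q) := by
      intro y hy
      apply ENNReal.ofReal_le_ofReal
      exact Real.rpow_le_rpow_of_nonpos (mul_pos hT ht0) hy.1.le hq.le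
    calc ∫⁻ y in A i, ENNReal.ofReal (‖y‖ ^ q)
        ≤ ENNReal.ofReal ((T * t) ^ q) * volume (A i) :=
          S.setlint_le_const _ _ hmeas _ hb
      _ ≤ ENNReal.ofReal ((T * t) ^ q) * volume (closedBall (0:S.E) (T * (t * 2))) :=
          mul_le_mul_right (measure_mono hsub) _
      _ = ENNReal.ofReal ((T * t) ^ q) * ENNReal.ofReal ((T * (t * 2)) ^ (S.N:ℝ) * S.v1) := by
          rw [S.vol_cb _ (T * (t * 2)) (by positivity)]
      _ = ENNReal.ofReal (((T * t) ^ q) * ((T * (t * 2)) ^ (S.N:ℝ) * S.v1)) :=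
          (ENNReal.ofReal_mul (Real.rpow_nonneg (by positivity) _)).symm
      _ = ENNReal.ofReal (((2:ℝ) ^ (S.N:ℝ) * S.v1 * T ^ (q + S.N)) * σ ^ i) := by
          congr 1
          have e1 : (T * t) ^ q = T ^ q * t ^ q := Real.mul_rpow hT.le ht0.le
          have e2 : (T * (t * 2)) ^ (S.N:ℝ) = T ^ (S.N:ℝ) * t ^ (S.N:ℝ) * (2:ℝ) ^ (S.N:ℝ) := by
            rw [Real.mul_rpow hT.le (by positivity), Real.mul_rpow ht0.le (by norm_num)]
            ring
          have e5 : T ^ q * T ^ (S.N:ℝ) = T ^ (q + S.N) := (Real.rpow_add hT q _).symm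
          have e6 : t ^ q * t ^ (S.N:ℝ) = t ^ (q + S.N) := (Real.rpow_add ht0 q _).symm
          have e7 : t ^ (q + S.N) = σ ^ i := by
            rw [htdef, ← Real.rpow_natCast (2:ℝ) i, ← Real.rpow_mul (by norm_num),
              mul_comm (i:ℝ), Real.rpow_mul (by norm_num), Real.rpow_natCast, hσdef]
          calc (T * t) ^ q * ((T * (t * 2)) ^ (S.N:ℝ) * S.v1)
              = (T ^ q * T ^ (S.N:ℝ)) * (t ^ q * t ^ (S.N:ℝ)) * ((2:ℝ) ^ (S.N:ℝ) * S.v1) := by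
                rw [e1, e2]; ring
            _ = T ^ (q + S.N) * σ ^ i * ((2:ℝ) ^ (S.N:ℝ) * S.v1) := by rw [e5, e6, e7]
            _ = (2:ℝ) ^ (S.N:ℝ) * S.v1 * T ^ (q + S.N) * σ ^ i := by ring
  calc ∫⁻ y in {y : S.E | T < ‖y‖}, ENNReal.ofReal (‖y‖ ^ q)
      ≤ ∫⁻ y in ⋃ i, A i, ENNReal.ofReal (‖y‖ ^ q) := lintegral_mono_set hcover
    _ ≤ ∑' i, ∫⁻ y in A i, ENNReal.ofReal (‖y‖ ^ q) := lintegral_iUnion_le _ _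
    _ ≤ ∑' i, ENNReal.ofReal (((2:ℝ) ^ (S.N:ℝ) * S.v1 * T ^ (q + S.N)) * σ ^ i) :=
        ENNReal.tsum_le_tsum hstep
    _ = ENNReal.ofReal (∑' i : ℕ, ((2:ℝ) ^ (S.N:ℝ) * S.v1 * T ^ (q + S.N)) * σ ^ i) := by
        rw [ENNReal.ofReal_tsum_of_nonneg (fun i => mul_nonneg (mul_nonneg (mul_nonneg
            (Real.rpow_nonneg (by norm_num) _) S.v1_pos.le) (Real.rpow_nonneg hT.le _))
            (pow_nonneg hσ0.le i))
          ((summable_geometric_of_lt_one hσ0.le hσ1).mul_left _)]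
    _ = ENNReal.ofReal ((2:ℝ) ^ (S.N:ℝ) * S.v1 * (1 - σ)⁻¹ * T ^ (q + S.N)) := by
        rw [tsum_mul_left, tsum_geometric_of_lt_one hσ0.le hσ1]
        congr 1; ring

/-! ### Lower bound -/

def lam : ℝ≥0∞ := ∫⁻ y in closedBall (0:S.E) 2⁻¹, ENNReal.ofReal (S.w y)

lemma lam_lt_top : S.lam < ⊤ := by
  set x' : S.E := S.pt 2 with hx'def
  have hx'norm : ‖x'‖ = 2 := S.norm_pt 2 (by norm_num)
  have hx' : x' ≠ 0 := S.pt_ne 2 (by norm_num)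
  have hpt : ∀ y ∈ closedBall (0:S.E) 2⁻¹,
      ENNReal.ofReal (S.w y) ≤ ENNReal.ofReal ((4:ℝ) ^ S.m) * ENNReal.ofReal (S.g x' y) := by
    intro y hy
    rw [mem_closedBall_zero_iff] at hy
    have hd : ‖x' - y‖ ≤ 4 := by
      calc ‖x' - y‖ ≤ ‖x'‖ + ‖y‖ := norm_sub_le _ _
      _ ≤ 2 + 2⁻¹ := by rw [hx'norm]; linarith
      _ ≤ 4 := by norm_num
    have hd0 : (0:ℝ) < ‖x' - y‖ := by
      have : (2:ℝ) - 2⁻¹ ≤ ‖x' - y‖ := by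
        have := norm_sub_norm_le x' y
        rw [hx'norm] at this
        linarith [abs_le.mp (abs_norm_sub_norm_le x' y)]
      linarith
    rw [← ENNReal.ofReal_mul (by positivity)]
    apply ENNReal.ofReal_le_ofReal
    have hgdef : S.g x' y = S.w y / ‖x' - y‖ ^ S.m := rfl
    rw [hgdef]
    have h1 : ‖x' - y‖ ^ S.m ≤ (4:ℝ) ^ S.m := Real.rpow_le_rpow (norm_nonneg _) hd S.hm.le
    have h2 : (0:ℝ) < ‖x' - y‖ ^ S.m := Real.rpow_pos_of_pos hd0 _
    calc S.w y = S.w y / ‖x' - y‖ ^ S.m * ‖x' - y‖ ^ S.m := (div_mul_cancel₀ _ h2.ne').symm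
    _ ≤ S.w y / ‖x' - y‖ ^ S.m * (4:ℝ) ^ S.m :=
        mul_le_mul_of_nonneg_left h1 (div_nonneg (S.w_nonneg y) h2.le)
    _ = (4:ℝ) ^ S.m * (S.w y / ‖x' - y‖ ^ S.m) := mul_comm _ _
  calc S.lam ≤ ∫⁻ y in closedBall (0:S.E) 2⁻¹,
        ENNReal.ofReal ((4:ℝ) ^ S.m) * ENNReal.ofReal (S.g x' y) :=
        setLIntegral_mono' measurableSet_closedBall hpt
    _ = ENNReal.ofReal ((4:ℝ) ^ S.m) * ∫⁻ y in closedBall (0:S.E) 2⁻¹,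
        ENNReal.ofReal (S.g x' y) :=
        lintegral_const_mul'' _ ((S.aemeas_g x' hx').restrict)
    _ ≤ ENNReal.ofReal ((4:ℝ) ^ S.m) * S.Lg x' :=
        mul_le_mul_right (setLIntegral_le_lintegral _ _) _
    _ < ⊤ := ENNReal.mul_lt_top ENNReal.ofReal_lt_top (S.Lg_lt_top x' hx')

lemma lam_pos : 0 < S.lam := by
  set z : S.E := S.pt 4⁻¹ with hzdef
  have hznorm : ‖z‖ = 4⁻¹ := S.norm_pt _ (by norm_num)
  set B : Set S.E := closedBall z 8⁻¹ with hBdef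
  have hBsub : B ⊆ closedBall (0:S.E) 2⁻¹ := by
    intro y hy
    rw [mem_closedBall_zero_iff]
    have h1 : ‖y - z‖ ≤ 8⁻¹ := mem_closedBall_iff_norm.mp hy
    calc ‖y‖ = ‖y - z + z‖ := by rw [sub_add_cancel]
    _ ≤ ‖y - z‖ + ‖z‖ := norm_add_le _ _
    _ ≤ 8⁻¹ + 4⁻¹ := by rw [hznorm]; linarith
    _ ≤ 2⁻¹ := by norm_num
  have hB0 : ∀ y ∈ B, y ≠ 0 := by
    intro y hy h0
    have h1 : ‖y - z‖ ≤ 8⁻¹ := mem_closedBall_iff_norm.mp hy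
    rw [h0, zero_sub, norm_neg, hznorm] at h1
    norm_num at h1
  have hwcont : ContinuousOn S.w B := by
    apply ContinuousOn.mul
    · apply ContinuousOn.rpow_const continuous_norm.continuousOn
      intro y hy
      exact Or.inl (norm_ne_zero_iff.mpr (hB0 y hy))
    · apply ContinuousOn.rpow_const (S.hcont.mono ?_)
      · intro y hy
        exact Or.inl (S.hpos y).ne'
      · intro y hy
        exact hB0 y hy
  have hBne : B.Nonempty := ⟨z, mem_closedBall_self (by norm_num)⟩
  obtain ⟨z₀, hz₀B, hz₀min⟩ := (isCompact_closedBall z 8⁻¹).exists_isMinOn hBne hwcont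
  have hc : 0 < S.w z₀ := S.w_pos z₀ (hB0 z₀ hz₀B)
  have hlow : ENNReal.ofReal (S.w z₀) * volume B ≤ S.lam := by
    calc ENNReal.ofReal (S.w z₀) * volume B = ∫⁻ _ in B, ENNReal.ofReal (S.w z₀) :=
        (setLIntegral_const B _).symm
    _ ≤ ∫⁻ y in B, ENNReal.ofReal (S.w y) :=
        setLIntegral_mono' measurableSet_closedBall
          (fun y hy => ENNReal.ofReal_le_ofReal (hz₀min hy))
    _ ≤ S.lam := lintegral_mono_set hBsub
  have hvol : 0 < volume B := measure_closedBall_pos _ _ (by norm_num)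
  have h0 : (0:ℝ≥0∞) < ENNReal.ofReal (S.w z₀) * volume B :=
    ENNReal.mul_pos (ENNReal.ofReal_pos.mpr hc).ne' hvol.ne'
  exact lt_of_lt_of_le h0 hlow

lemma lower_bound : ∃ c₁ : ℝ, 0 < c₁ ∧ ∀ x : S.E, 1 ≤ ‖x‖ →
    c₁ * ‖x‖ ^ (-S.m) ≤ S.u x := by
  refine ⟨(2:ℝ) ^ (-S.m) * S.lam.toReal, by
    have h1 : 0 < S.lam.toReal := ENNReal.toReal_pos S.lam_pos.ne' S.lam_lt_top.ne
    positivity, ?_⟩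
  intro x hx
  have hx0 : x ≠ 0 := by
    intro h; rw [h, norm_zero] at hx; linarith
  have hxn : 0 < ‖x‖ := by linarith
  have hker : ∀ y ∈ closedBall (0:S.E) 2⁻¹,
      ENNReal.ofReal ((2 * ‖x‖) ^ (-S.m)) * ENNReal.ofReal (S.w y)
        ≤ ENNReal.ofReal (S.g x y) := by
    intro y hy
    rw [mem_closedBall_zero_iff] at hy
    have hd : ‖x - y‖ ≤ 2 * ‖x‖ := by
      calc ‖x - y‖ ≤ ‖x‖ + ‖y‖ := norm_sub_le _ _
      _ ≤ ‖x‖ + 2⁻¹ := by linarith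
      _ ≤ 2 * ‖x‖ := by linarith
    have hd0 : (0:ℝ) < ‖x - y‖ := by
      have := abs_le.mp (abs_norm_sub_norm_le x y)
      linarith
    rw [← ENNReal.ofReal_mul (Real.rpow_nonneg (by positivity) _)]
    apply ENNReal.ofReal_le_ofReal
    have hgdef : S.g x y = S.w y / ‖x - y‖ ^ S.m := rfl
    rw [hgdef]
    have h1 : ‖x - y‖ ^ S.m ≤ (2 * ‖x‖) ^ S.m := Real.rpow_le_rpow (norm_nonneg _) hd S.hm.le
    have h2 : (0:ℝ) < ‖x - y‖ ^ S.m := Real.rpow_pos_of_pos hd0 _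
    have h3 : (0:ℝ) < (2 * ‖x‖) ^ S.m := Real.rpow_pos_of_pos (by positivity) _
    rw [Real.rpow_neg (by positivity), ← one_div, div_mul_eq_mul_div, one_mul,
      div_le_div_iff₀ h3 h2]
    exact mul_le_mul_of_nonneg_left h1 (S.w_nonneg y)
  have hmain : ENNReal.ofReal ((2 * ‖x‖) ^ (-S.m)) * S.lam ≤ S.Lg x := by
    calc ENNReal.ofReal ((2 * ‖x‖) ^ (-S.m)) * S.lam
        ≤ ∫⁻ y in closedBall (0:S.E) 2⁻¹,
            ENNReal.ofReal ((2 * ‖x‖) ^ (-S.m)) * ENNReal.ofReal (S.w y) :=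
          lintegral_const_mul_le _ _
      _ ≤ ∫⁻ y in closedBall (0:S.E) 2⁻¹, ENNReal.ofReal (S.g x y) :=
          setLIntegral_mono' measurableSet_closedBall hker
      _ ≤ S.Lg x := setLIntegral_le_lintegral _ _
  have htoReal := ENNReal.toReal_mono (S.Lg_lt_top x hx0).ne hmain
  rw [ENNReal.toReal_mul, ENNReal.toReal_ofReal (Real.rpow_nonneg (by positivity) _)] at htoReal
  rw [← S.u_eq_toReal x hx0] at htoReal
  calc (2:ℝ) ^ (-S.m) * S.lam.toReal * ‖x‖ ^ (-S.m)
      = (2 * ‖x‖) ^ (-S.m) * S.lam.toReal := by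
        rw [Real.mul_rpow (by norm_num) (norm_nonneg x)]; ring
    _ ≤ S.u x := htoReal

/-! ### Constants for the core estimate -/

def CA : ℝ := (8:ℝ) ^ S.m
def C6 : ℝ := (2:ℝ) ^ S.m * (2:ℝ) ^ |S.α| * (2:ℝ) ^ (S.N:ℝ) * S.v1
def CH1a : ℝ := (2:ℝ) ^ (-(S.m/2 - S.N)) * S.v1 * (1 - (2:ℝ) ^ (-((S.m/2 - S.N) + S.N)))⁻¹
def CH1b : ℝ := (2:ℝ) ^ (-(-S.m)) * S.v1 * (1 - (2:ℝ) ^ (-((-S.m) + S.N)))⁻¹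
def CH2c : ℝ := (2:ℝ) ^ (S.N:ℝ) * S.v1 * (1 - (2:ℝ) ^ ((S.m/2 - S.N - S.m) + S.N))⁻¹
def C70 : ℝ := (2:ℝ) ^ (S.m/2) * S.CH1a
def C71 : ℝ := (2:ℝ) ^ ((S.N:ℝ) - S.m/2) * (4:ℝ) ^ (S.m - S.N) * S.CH1b
def C72 : ℝ := (8:ℝ) ^ S.m * (2:ℝ) ^ (S.m/2) * S.CH2c
def C7 : ℝ := S.C70 + S.C71 + S.C72

lemma CH1a_pos : 0 < S.CH1a := by
  have h1 : (2:ℝ) ^ (-((S.m/2 - S.N) + S.N)) < 1 := by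
    apply Real.rpow_lt_one_of_one_lt_of_neg one_lt_two
    have := S.hm2; linarith
  have h2 : (0:ℝ) < (2:ℝ) ^ (-((S.m/2 - S.N) + S.N)) := Real.rpow_pos_of_pos two_pos _
  have := S.v1_pos
  unfold CH1a
  have h3 : (0:ℝ) < (1 - (2:ℝ) ^ (-((S.m/2 - S.N) + S.N)))⁻¹ := by
    apply inv_pos.mpr; linarith
  positivity

lemma CH1b_pos : 0 < S.CH1b := by
  have hs := S.hs0
  have hmN := S.hNm
  have h1 : (2:ℝ) ^ (-((-S.m) + S.N)) < 1 := by
    apply Real.rpow_lt_one_of_one_lt_of_neg one_lt_two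
    linarith
  have h2 : (0:ℝ) < (2:ℝ) ^ (-((-S.m) + S.N)) := Real.rpow_pos_of_pos two_pos _
  have := S.v1_pos
  unfold CH1b
  have h3 : (0:ℝ) < (1 - (2:ℝ) ^ (-((-S.m) + S.N)))⁻¹ := by
    apply inv_pos.mpr; linarith
  positivity

lemma CH2c_pos : 0 < S.CH2c := by
  have h1 : (2:ℝ) ^ ((S.m/2 - S.N - S.m) + S.N) < 1 := by
    apply Real.rpow_lt_one_of_one_lt_of_neg one_lt_two
    have := S.hm2; linarith
  have h2 : (0:ℝ) < (2:ℝ) ^ ((S.m/2 - S.N - S.m) + S.N) := Real.rpow_pos_of_pos two_pos _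
  have := S.v1_pos
  unfold CH2c
  have h3 : (0:ℝ) < (1 - (2:ℝ) ^ ((S.m/2 - S.N - S.m) + S.N))⁻¹ := by
    apply inv_pos.mpr; linarith
  positivity

lemma CA_pos : 0 < S.CA := Real.rpow_pos_of_pos (by norm_num) _
lemma C6_pos : 0 < S.C6 := by
  have := S.v1_pos; unfold C6; positivity
lemma C70_pos : 0 < S.C70 := mul_pos (Real.rpow_pos_of_pos two_pos _) S.CH1a_pos
lemma C71_pos : 0 < S.C71 :=
  mul_pos (mul_pos (Real.rpow_pos_of_pos two_pos _) (Real.rpow_pos_of_pos (by norm_num) _))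
    S.CH1b_pos
lemma C72_pos : 0 < S.C72 :=
  mul_pos (mul_pos (Real.rpow_pos_of_pos (by norm_num) _) (Real.rpow_pos_of_pos two_pos _))
    S.CH2c_pos
lemma C7_pos : 0 < S.C7 := by
  have := S.C70_pos; have := S.C71_pos; have := S.C72_pos; unfold C7; linarith

lemma two_pow_rpow (j : ℕ) (c : ℝ) : ((2:ℝ) ^ j) ^ c = ((2:ℝ) ^ c) ^ j := by
  rw [← Real.rpow_natCast (2:ℝ) j, ← Real.rpow_mul (by norm_num), mul_comm,
    Real.rpow_mul (by norm_num), Real.rpow_natCast]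

/-- Far-field pointwise bound on the density `w`. -/
lemma hw_far (t : ℝ) (ht : 1 ≤ t) (y : S.E) (hy : t ≤ ‖y‖) :
    S.w y ≤ S.h t ^ S.p * ‖y‖ ^ (S.m/2 - S.N) := by
  have hy0 : 0 < ‖y‖ := lt_of_lt_of_le (by linarith) hy
  have hu := S.u_le t ht y hy
  have hh0 : 0 ≤ S.h t := S.h_nonneg t ht
  have h1 : S.u y ^ S.p ≤ (S.h t * ‖y‖ ^ (-(S.m/2))) ^ S.p :=
    Real.rpow_le_rpow (S.u_nonneg y) hu S.hp0.le
  have h2 : S.w y ≤ ‖y‖ ^ S.α * (S.h t * ‖y‖ ^ (-(S.m/2))) ^ S.p :=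
    mul_le_mul_of_nonneg_left h1 (Real.rpow_nonneg (norm_nonneg _) _)
  have h3 : (S.h t * ‖y‖ ^ (-(S.m/2))) ^ S.p = S.h t ^ S.p * ‖y‖ ^ (-(S.m/2) * S.p) := by
    rw [Real.mul_rpow hh0 (Real.rpow_nonneg (norm_nonneg _) _), ← Real.rpow_mul (norm_nonneg _)]
  have h4 : ‖y‖ ^ S.α * (S.h t ^ S.p * ‖y‖ ^ (-(S.m/2) * S.p))
      = S.h t ^ S.p * ‖y‖ ^ (S.α + -(S.m/2) * S.p) := by
    rw [Real.rpow_add hy0]; ring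
  have h5 : S.α + -(S.m/2) * S.p = S.m/2 - S.N := by
    have := S.keyexp; linarith
  calc S.w y ≤ ‖y‖ ^ S.α * (S.h t * ‖y‖ ^ (-(S.m/2))) ^ S.p := h2
  _ = S.h t ^ S.p * ‖y‖ ^ (S.α + -(S.m/2) * S.p) := by rw [h3, h4]
  _ = S.h t ^ S.p * ‖y‖ ^ (S.m/2 - S.N) := by rw [h5]

/-- Shell pointwise bound on the density `w`. -/
lemma hw_shell (T : ℝ) (hT : 1 ≤ T) (y : S.E) (hy1 : T ≤ ‖y‖) (hy2 : ‖y‖ ≤ 2 * T) :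
    S.w y ≤ (2:ℝ) ^ |S.α| * S.h T ^ S.p * T ^ (S.m/2 - S.N) := by
  have hT0 : 0 < T := by linarith
  have hy0 : 0 < ‖y‖ := by linarith
  have hh0 : 0 ≤ S.h T := S.h_nonneg T hT
  have hα_bd : ‖y‖ ^ S.α ≤ (2:ℝ) ^ |S.α| * T ^ S.α := by
    rcases le_or_gt 0 S.α with hα | hα
    · calc ‖y‖ ^ S.α ≤ (2 * T) ^ S.α := Real.rpow_le_rpow (norm_nonneg _) hy2 hα
      _ = (2:ℝ) ^ S.α * T ^ S.α := Real.mul_rpow (by norm_num) hT0.le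
      _ ≤ (2:ℝ) ^ |S.α| * T ^ S.α := by
          apply mul_le_mul_of_nonneg_right _ (Real.rpow_nonneg hT0.le _)
          exact Real.rpow_le_rpow_of_exponent_le one_le_two (le_abs_self _)
    · calc ‖y‖ ^ S.α ≤ T ^ S.α := Real.rpow_le_rpow_of_nonpos hT0 hy1 hα.le
      _ = 1 * T ^ S.α := (one_mul _).symm
      _ ≤ (2:ℝ) ^ |S.α| * T ^ S.α := by
          apply mul_le_mul_of_nonneg_right _ (Real.rpow_nonneg hT0.le _)
          exact Real.one_le_rpow one_le_two (abs_nonneg _)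
  have hu := S.u_le T hT y hy1
  have hu2 : S.u y ≤ S.h T * T ^ (-(S.m/2)) := by
    apply le_trans hu
    apply mul_le_mul_of_nonneg_left _ hh0
    exact Real.rpow_le_rpow_of_nonpos hT0 hy1 (by linarith [S.hm2])
  have h1 : S.u y ^ S.p ≤ (S.h T * T ^ (-(S.m/2))) ^ S.p :=
    Real.rpow_le_rpow (S.u_nonneg y) hu2 S.hp0.le
  have h3 : (S.h T * T ^ (-(S.m/2))) ^ S.p = S.h T ^ S.p * T ^ (-(S.m/2) * S.p) := by
    rw [Real.mul_rpow hh0 (Real.rpow_nonneg hT0.le _), ← Real.rpow_mul hT0.le]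
  have h5 : S.α + -(S.m/2) * S.p = S.m/2 - S.N := by
    have := S.keyexp; linarith
  calc S.w y = ‖y‖ ^ S.α * S.u y ^ S.p := rfl
  _ ≤ ((2:ℝ) ^ |S.α| * T ^ S.α) * ((S.h T * T ^ (-(S.m/2))) ^ S.p) := by
      apply mul_le_mul hα_bd h1 (Real.rpow_nonneg (S.u_nonneg y) _)
      positivity
  _ = (2:ℝ) ^ |S.α| * S.h T ^ S.p * (T ^ S.α * T ^ (-(S.m/2) * S.p)) := by rw [h3]; ring
  _ = (2:ℝ) ^ |S.α| * S.h T ^ S.p * T ^ (S.m/2 - S.N) := by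
      rw [← Real.rpow_add hT0, h5]

set_option maxHeartbeats 2000000 in
/-- The core one-scale estimate. -/
lemma core (R₁ : ℝ) (hR₁ : 1 ≤ R₁) (k : ℕ) (hk : 2 ≤ k) (x : S.E)
    (hx : R₁ * 2^k ≤ ‖x‖) :
    S.u x ≤ ‖x‖ ^ (-(S.m/2)) * ((‖x‖ ^ (-(S.m/2)) * R₁ ^ (S.m/2)) * (S.CA * S.h (2*R₁+1)
        + S.C6 * ∑ j ∈ Finset.range (k-1), S.h (R₁*2^j) ^ S.p * S.b ^ j)
      + S.C7 * S.h (R₁*2^(k-1)) ^ S.p) := by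
  classical
  set r : ℝ := ‖x‖ with hrdef
  have h2k : (4:ℝ) ≤ 2^k := by
    calc (4:ℝ) = 2^2 := by norm_num
    _ ≤ 2^k := pow_le_pow_right₀ one_le_two hk
  have hR₁0 : 0 < R₁ := by linarith
  have h2k0 : (0:ℝ) < 2^k := by positivity
  have hrR : 4 * R₁ ≤ r := by
    calc 4 * R₁ = R₁ * 4 := by ring
    _ ≤ R₁ * 2^k := by nlinarith
    _ ≤ r := hx
  have hr0 : 0 < r := by linarith
  have hx0 : x ≠ 0 := by
    intro h
    have : r = 0 := by rw [hrdef, h, norm_zero]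
    linarith
  have hpow_k1 : (2:ℝ)^(k-1) * 2 = 2^k := by
    rw [← pow_succ]
    congr 1
    omega
  have hRk1_le : R₁ * 2^(k-1) ≤ r/2 := by
    have h1 : R₁ * 2^(k-1) * 2 = R₁ * 2^k := by rw [mul_assoc, hpow_k1]
    nlinarith
  have h2k1_ge1 : (1:ℝ) ≤ 2^(k-1) := one_le_pow₀ one_le_two
  have hRk1_ge1 : 1 ≤ R₁ * 2^(k-1) := by nlinarith
  set a : ℝ := S.h (R₁ * 2^(k-1)) with hadef
  have ha0 : 0 ≤ a := S.h_nonneg _ hRk1_ge1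
  set F : S.E → ℝ≥0∞ := fun y => ENNReal.ofReal (S.g x y) with hFdef
  -- regions
  set A0 : Set S.E := closedBall (0:S.E) R₁ with hA0def
  set Sh : ℕ → Set S.E := fun j =>
    {y : S.E | R₁*2^j < ‖y‖ ∧ ‖y‖ ≤ R₁*2^(j+1) ∧ ‖y‖ ≤ R₁*2^(k-1)} with hShdef
  set G0 : Set S.E := {y : S.E | R₁*2^(k-1) < ‖y‖ ∧ ‖y‖ ≤ r/2} with hG0def
  set G1 : Set S.E := closedBall x (r/4) with hG1def
  set G2 : Set S.E := {y : S.E | r/2 < ‖y‖ ∧ r/4 < ‖x - y‖} with hG2def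
  have hcover : (univ : Set S.E) ⊆ (((A0 ∪ G0) ∪ G1) ∪ G2) ∪ ⋃ j, Sh j := by
    intro y _
    by_cases h1 : ‖y‖ ≤ R₁
    · exact Or.inl (Or.inl (Or.inl (Or.inl (mem_closedBall_zero_iff.mpr h1))))
    · push_neg at h1
      by_cases h2 : ‖y‖ ≤ R₁ * 2^(k-1)
      · right
        have hex : ∃ j : ℕ, ‖y‖ ≤ R₁ * 2^(j+1) := by
          refine ⟨k-2, ?_⟩
          have he : k - 2 + 1 = k - 1 := by omega
          rw [he]
          exact h2
        have hspec := Nat.find_spec hex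
        have hlow : R₁ * 2^(Nat.find hex) < ‖y‖ := by
          rcases Nat.eq_zero_or_pos (Nat.find hex) with h0 | h0
          · rw [h0]; simpa using h1
          · have hmin := Nat.find_min hex (Nat.sub_lt h0 one_pos)
            rw [not_le] at hmin
            have heq : Nat.find hex - 1 + 1 = Nat.find hex := by omega
            rwa [heq] at hmin
        exact mem_iUnion.mpr ⟨Nat.find hex, hlow, hspec, h2⟩
      · push_neg at h2
        by_cases h3 : ‖x - y‖ ≤ r/4
        · refine Or.inl (Or.inl (Or.inr ?_))
          rw [hG1def, mem_closedBall_iff_norm, norm_sub_rev]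
          exact h3
        · push_neg at h3
          by_cases h4 : ‖y‖ ≤ r/2
          · exact Or.inl (Or.inl (Or.inl (Or.inr ⟨h2, h4⟩)))
          · push_neg at h4
            exact Or.inl (Or.inr ⟨h4, h3⟩)
  have hchain : S.Lg x ≤ ((((∫⁻ y in A0, F y) + ∫⁻ y in G0, F y) + ∫⁻ y in G1, F y)
      + ∫⁻ y in G2, F y) + ∑' j, ∫⁻ y in Sh j, F y := by
    have h1 : S.Lg x = ∫⁻ y in univ, F y := (setLIntegral_univ _).symm
    rw [h1]
    calc ∫⁻ y in univ, F y ≤ ∫⁻ y in (((A0 ∪ G0) ∪ G1) ∪ G2) ∪ ⋃ j, Sh j, F y :=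
        lintegral_mono_set hcover
    _ ≤ (∫⁻ y in ((A0 ∪ G0) ∪ G1) ∪ G2, F y) + ∫⁻ y in ⋃ j, Sh j, F y := S.lint_union_le _ _ _
    _ ≤ ((∫⁻ y in (A0 ∪ G0) ∪ G1, F y) + ∫⁻ y in G2, F y) + ∫⁻ y in ⋃ j, Sh j, F y :=
        add_le_add_left (S.lint_union_le _ _ _) _
    _ ≤ (((∫⁻ y in A0 ∪ G0, F y) + ∫⁻ y in G1, F y) + ∫⁻ y in G2, F y)
        + ∫⁻ y in ⋃ j, Sh j, F y :=
        add_le_add_left (add_le_add_left (S.lint_union_le _ _ _) _) _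
    _ ≤ ((((∫⁻ y in A0, F y) + ∫⁻ y in G0, F y) + ∫⁻ y in G1, F y) + ∫⁻ y in G2, F y)
        + ∫⁻ y in ⋃ j, Sh j, F y :=
        add_le_add_left (add_le_add_left (add_le_add_left (S.lint_union_le _ _ _) _) _) _
    _ ≤ ((((∫⁻ y in A0, F y) + ∫⁻ y in G0, F y) + ∫⁻ y in G1, F y) + ∫⁻ y in G2, F y)
        + ∑' j, ∫⁻ y in Sh j, F y :=
        add_le_add_right (lintegral_iUnion_le _ _) _
  -- the far point x'
  set x' : S.E := S.pt (2*R₁+1) with hx'def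
  have hx'norm : ‖x'‖ = 2*R₁+1 := S.norm_pt _ (by linarith)
  have hx'ne : x' ≠ 0 := S.pt_ne _ (by linarith)
  -- region constants
  set cA0 : ℝ := ((3*R₁+1) ^ S.m / (r/2) ^ S.m) * S.u x' with hcA0
  set cG0 : ℝ := (a ^ S.p / (r/2) ^ S.m) * ((2:ℝ)^(-(S.m/2 - S.N)) * S.v1 *
      (1 - (2:ℝ)^(-((S.m/2 - S.N) + S.N)))⁻¹ * (r/2)^((S.m/2 - S.N) + S.N)) with hcG0
  set cG1 : ℝ := (a ^ S.p * (r/2) ^ (S.m/2 - S.N)) * ((2:ℝ)^(-(-S.m)) * S.v1 *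
      (1 - (2:ℝ)^(-((-S.m) + S.N)))⁻¹ * (r/4)^((-S.m) + S.N)) with hcG1
  set cG2 : ℝ := (a ^ S.p * (8:ℝ) ^ S.m) * ((2:ℝ)^(S.N:ℝ) * S.v1 *
      (1 - (2:ℝ)^((S.m/2 - S.N - S.m) + S.N))⁻¹ * (r/2)^((S.m/2 - S.N - S.m) + S.N)) with hcG2
  set csh : ℕ → ℝ := fun j => if j < k-1 then
      S.C6 * r^(-S.m) * R₁^(S.m/2) * S.h (R₁*2^j) ^ S.p * S.b ^ j else 0 with hcshdef
  have hux'0 : 0 ≤ S.u x' := S.u_nonneg x'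
  -- A0 bound
  have hA0bound : ∫⁻ y in A0, F y ≤ ENNReal.ofReal cA0 := by
    have hpt : ∀ y ∈ A0, F y ≤ ENNReal.ofReal ((3*R₁+1) ^ S.m / (r/2) ^ S.m)
        * ENNReal.ofReal (S.g x' y) := by
      intro y hy
      rw [hA0def, mem_closedBall_zero_iff] at hy
      have hdxy : r/2 ≤ ‖x - y‖ := by
        have h2 := norm_sub_norm_le x y
        rw [← hrdef] at h2
        linarith
      have hdx'l : (0:ℝ) < ‖x' - y‖ := by
        have h2 := norm_sub_norm_le x' y
        rw [hx'norm] at h2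
        linarith
      have hdx'u : ‖x' - y‖ ≤ 3*R₁+1 := by
        calc ‖x' - y‖ ≤ ‖x'‖ + ‖y‖ := norm_sub_le _ _
        _ ≤ (2*R₁+1) + R₁ := by rw [hx'norm]; linarith
        _ = 3*R₁+1 := by ring
      rw [← ENNReal.ofReal_mul (by positivity)]
      apply ENNReal.ofReal_le_ofReal
      have hw4 : S.w y ≤ (3*R₁+1) ^ S.m * S.g x' y := by
        have e2 : S.g x' y = S.w y / ‖x' - y‖ ^ S.m := rfl
        rw [e2]
        have hb2 : (0:ℝ) < ‖x' - y‖ ^ S.m := Real.rpow_pos_of_pos hdx'l _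
        have hb1 : ‖x' - y‖ ^ S.m ≤ (3*R₁+1) ^ S.m :=
          Real.rpow_le_rpow (norm_nonneg _) hdx'u S.hm.le
        calc S.w y = S.w y / ‖x' - y‖ ^ S.m * ‖x' - y‖ ^ S.m := (div_mul_cancel₀ _ hb2.ne').symm
        _ ≤ S.w y / ‖x' - y‖ ^ S.m * (3*R₁+1) ^ S.m :=
            mul_le_mul_of_nonneg_left hb1 (div_nonneg (S.w_nonneg y) hb2.le)
        _ = (3*R₁+1) ^ S.m * (S.w y / ‖x' - y‖ ^ S.m) := mul_comm _ _
      have e1 : S.g x y = S.w y / ‖x - y‖ ^ S.m := rfl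
      rw [e1]
      calc S.w y / ‖x - y‖ ^ S.m ≤ ((3*R₁+1) ^ S.m * S.g x' y) / (r/2) ^ S.m :=
          div_le_div₀ (mul_nonneg (Real.rpow_nonneg (by positivity) _) (S.g_nonneg x' y)) hw4
            (Real.rpow_pos_of_pos (by linarith) _)
            (Real.rpow_le_rpow (by positivity) hdxy S.hm.le)
      _ = (3*R₁+1) ^ S.m / (r/2) ^ S.m * S.g x' y := by ring
    calc ∫⁻ y in A0, F y ≤ ∫⁻ y in A0, ENNReal.ofReal ((3*R₁+1) ^ S.m / (r/2) ^ S.m)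
          * ENNReal.ofReal (S.g x' y) :=
        setLIntegral_mono' (hA0def ▸ measurableSet_closedBall) hpt
    _ = ENNReal.ofReal ((3*R₁+1) ^ S.m / (r/2) ^ S.m)
        * ∫⁻ y in A0, ENNReal.ofReal (S.g x' y) :=
        lintegral_const_mul'' _ ((S.aemeas_g x' hx'ne).restrict)
    _ ≤ ENNReal.ofReal ((3*R₁+1) ^ S.m / (r/2) ^ S.m) * S.Lg x' :=
        mul_le_mul_right (setLIntegral_le_lintegral _ _) _
    _ = ENNReal.ofReal ((3*R₁+1) ^ S.m / (r/2) ^ S.m) * ENNReal.ofReal (S.u x') := by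
        rw [S.ofReal_u x' hx'ne]
    _ = ENNReal.ofReal cA0 := (ENNReal.ofReal_mul (by positivity)).symm
  -- G0 bound
  have hmeasG0 : MeasurableSet G0 := by
    rw [hG0def]
    exact (measurableSet_lt measurable_const measurable_norm).inter
      (measurableSet_le measurable_norm measurable_const)
  have hq0neg : S.m/2 - S.N < 0 := by
    have := S.hm2; have := S.hmN; linarith
  have hG0bound : ∫⁻ y in G0, F y ≤ ENNReal.ofReal cG0 := by
    have hpt : ∀ y ∈ G0, F y ≤ ENNReal.ofReal (a ^ S.p / (r/2) ^ S.m)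
        * ENNReal.ofReal (‖y - 0‖ ^ (S.m/2 - S.N)) := by
      intro y hy
      rw [hG0def, mem_setOf_eq] at hy
      obtain ⟨hy1, hy2⟩ := hy
      have hwy := S.hw_far (R₁ * 2^(k-1)) hRk1_ge1 y hy1.le
      have hdxy : r/2 ≤ ‖x - y‖ := by
        have h2 := norm_sub_norm_le x y
        rw [← hrdef] at h2
        linarith
      rw [← ENNReal.ofReal_mul (by positivity), sub_zero]
      apply ENNReal.ofReal_le_ofReal
      have e1 : S.g x y = S.w y / ‖x - y‖ ^ S.m := rfl
      rw [e1]
      calc S.w y / ‖x - y‖ ^ S.m ≤ (a ^ S.p * ‖y‖ ^ (S.m/2 - S.N)) / (r/2) ^ S.m :=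
          div_le_div₀ (by positivity) hwy (Real.rpow_pos_of_pos (by linarith) _)
            (Real.rpow_le_rpow (by positivity) hdxy S.hm.le)
      _ = a ^ S.p / (r/2) ^ S.m * ‖y‖ ^ (S.m/2 - S.N) := by ring
    have hsubG0 : G0 ⊆ closedBall (0:S.E) (r/2) := by
      intro y hy
      rw [hG0def, mem_setOf_eq] at hy
      exact mem_closedBall_zero_iff.mpr hy.2
    calc ∫⁻ y in G0, F y ≤ ∫⁻ y in G0, ENNReal.ofReal (a ^ S.p / (r/2) ^ S.m)
          * ENNReal.ofReal (‖y - 0‖ ^ (S.m/2 - S.N)) := setLIntegral_mono' hmeasG0 hpt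
    _ = ENNReal.ofReal (a ^ S.p / (r/2) ^ S.m)
        * ∫⁻ y in G0, ENNReal.ofReal (‖y - 0‖ ^ (S.m/2 - S.N)) :=
        lintegral_const_mul'' _
          (((((measurable_id.sub measurable_const).norm).pow measurable_const).ennreal_ofReal).aemeasurable.restrict)
    _ ≤ ENNReal.ofReal (a ^ S.p / (r/2) ^ S.m)
        * ∫⁻ y in closedBall (0:S.E) (r/2), ENNReal.ofReal (‖y - 0‖ ^ (S.m/2 - S.N)) :=
        mul_le_mul_right (lintegral_mono_set hsubG0) _
    _ ≤ ENNReal.ofReal (a ^ S.p / (r/2) ^ S.m) * ENNReal.ofReal ((2:ℝ)^(-(S.m/2 - S.N)) * S.v1 *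
        (1 - (2:ℝ)^(-((S.m/2 - S.N) + S.N)))⁻¹ * (r/2)^((S.m/2 - S.N) + S.N)) :=
        mul_le_mul_right (S.H1 0 (r/2) (S.m/2 - S.N) (by linarith)
          (by have := S.hm2; linarith) hq0neg) _
    _ = ENNReal.ofReal cG0 := (ENNReal.ofReal_mul (by positivity)).symm
  -- G1 bound
  have hG1bound : ∫⁻ y in G1, F y ≤ ENNReal.ofReal cG1 := by
    have hpt : ∀ y ∈ G1, F y ≤ ENNReal.ofReal (a ^ S.p * (r/2) ^ (S.m/2 - S.N))
        * ENNReal.ofReal (‖y - x‖ ^ (-S.m)) := by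
      intro y hy
      rw [hG1def, mem_closedBall_iff_norm] at hy
      have hyx : ‖x - y‖ ≤ r/4 := by rw [norm_sub_rev]; exact hy
      have hyn : r/2 ≤ ‖y‖ := by
        have h2 := norm_sub_norm_le x y
        rw [← hrdef] at h2
        linarith
      have hyRk : R₁ * 2^(k-1) ≤ ‖y‖ := le_trans hRk1_le hyn
      have hwy := S.hw_far _ hRk1_ge1 y hyRk
      have hwy2 : S.w y ≤ a ^ S.p * (r/2) ^ (S.m/2 - S.N) := by
        apply le_trans hwy
        apply mul_le_mul_of_nonneg_left _ (Real.rpow_nonneg ha0 _)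
        exact Real.rpow_le_rpow_of_nonpos (by linarith) hyn hq0neg.le
      rw [← ENNReal.ofReal_mul (by positivity)]
      apply ENNReal.ofReal_le_ofReal
      have e1 : S.g x y = S.w y * ‖x - y‖ ^ (-S.m) := by
        rw [Real.rpow_neg (norm_nonneg _)]
        exact div_eq_mul_inv _ _
      rw [e1, norm_sub_rev x y]
      exact mul_le_mul_of_nonneg_right hwy2 (Real.rpow_nonneg (norm_nonneg _) _)
    calc ∫⁻ y in G1, F y ≤ ∫⁻ y in G1, ENNReal.ofReal (a ^ S.p * (r/2) ^ (S.m/2 - S.N))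
          * ENNReal.ofReal (‖y - x‖ ^ (-S.m)) :=
        setLIntegral_mono' (hG1def ▸ measurableSet_closedBall) hpt
    _ = ENNReal.ofReal (a ^ S.p * (r/2) ^ (S.m/2 - S.N))
        * ∫⁻ y in G1, ENNReal.ofReal (‖y - x‖ ^ (-S.m)) :=
        lintegral_const_mul'' _
          (((((measurable_id.sub measurable_const).norm).pow measurable_const).ennreal_ofReal).aemeasurable.restrict)
    _ ≤ ENNReal.ofReal (a ^ S.p * (r/2) ^ (S.m/2 - S.N)) * ENNReal.ofReal ((2:ℝ)^(-(-S.m)) * S.v1 *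
        (1 - (2:ℝ)^(-((-S.m) + S.N)))⁻¹ * (r/4)^((-S.m) + S.N)) := by
        apply mul_le_mul_right
        rw [hG1def]
        apply S.H1 x (r/4) (-S.m) (by linarith)
        · have := S.hNm; have := S.hs0; linarith
        · have := S.hm; linarith
    _ = ENNReal.ofReal cG1 := (ENNReal.ofReal_mul (by positivity)).symm
  -- G2 bound
  have hmeasG2 : MeasurableSet G2 := by
    rw [hG2def]
    exact (measurableSet_lt measurable_const measurable_norm).inter
      (measurableSet_lt measurable_const ((measurable_const.sub measurable_id).norm))
  have hG2bound : ∫⁻ y in G2, F y ≤ ENNReal.ofReal cG2 := by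
    have hpt : ∀ y ∈ G2, F y ≤ ENNReal.ofReal (a ^ S.p * (8:ℝ) ^ S.m)
        * ENNReal.ofReal (‖y‖ ^ (S.m/2 - S.N - S.m)) := by
      intro y hy
      rw [hG2def, mem_setOf_eq] at hy
      obtain ⟨hy1, hy2⟩ := hy
      have hy0 : (0:ℝ) < ‖y‖ := by linarith
      have hd8 : ‖y‖/8 ≤ ‖x - y‖ := by
        rcases le_or_gt ‖y‖ (2*r) with hc | hc
        · linarith
        · have h2 := norm_sub_norm_le y x
          rw [norm_sub_rev y x, ← hrdef] at h2
          linarith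
      have hyRk : R₁ * 2^(k-1) ≤ ‖y‖ := le_trans hRk1_le hy1.le
      have hwy := S.hw_far _ hRk1_ge1 y hyRk
      rw [← ENNReal.ofReal_mul (by positivity)]
      apply ENNReal.ofReal_le_ofReal
      have hd80 : (0:ℝ) < ‖y‖/8 := by linarith
      have e1 : S.g x y = S.w y / ‖x - y‖ ^ S.m := rfl
      rw [e1]
      calc S.w y / ‖x - y‖ ^ S.m ≤ (a ^ S.p * ‖y‖ ^ (S.m/2 - S.N)) / (‖y‖/8) ^ S.m :=
          div_le_div₀ (by positivity) hwy (Real.rpow_pos_of_pos hd80 _)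
            (Real.rpow_le_rpow hd80.le hd8 S.hm.le)
      _ = a ^ S.p * (8:ℝ) ^ S.m * ‖y‖ ^ (S.m/2 - S.N - S.m) := by
          rw [Real.div_rpow hy0.le (by norm_num : (0:ℝ) ≤ 8)]
          have e2 : ‖y‖ ^ (S.m/2 - S.N - S.m) = ‖y‖ ^ (S.m/2 - S.N) / ‖y‖ ^ S.m :=
            Real.rpow_sub hy0 _ _
          rw [e2]
          have h8 : (0:ℝ) < (8:ℝ) ^ S.m := Real.rpow_pos_of_pos (by norm_num) _
          have hym : (0:ℝ) < ‖y‖ ^ S.m := Real.rpow_pos_of_pos hy0 _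
          field_simp
    have hsubG2 : G2 ⊆ {y : S.E | r/2 < ‖y‖} := by
      intro y hy
      rw [hG2def, mem_setOf_eq] at hy
      exact hy.1
    calc ∫⁻ y in G2, F y ≤ ∫⁻ y in G2, ENNReal.ofReal (a ^ S.p * (8:ℝ) ^ S.m)
          * ENNReal.ofReal (‖y‖ ^ (S.m/2 - S.N - S.m)) := setLIntegral_mono' hmeasG2 hpt
    _ = ENNReal.ofReal (a ^ S.p * (8:ℝ) ^ S.m)
        * ∫⁻ y in G2, ENNReal.ofReal (‖y‖ ^ (S.m/2 - S.N - S.m)) :=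
        lintegral_const_mul'' _
          (((measurable_norm.pow measurable_const).ennreal_ofReal).aemeasurable.restrict)
    _ ≤ ENNReal.ofReal (a ^ S.p * (8:ℝ) ^ S.m)
        * ∫⁻ y in {y : S.E | r/2 < ‖y‖}, ENNReal.ofReal (‖y‖ ^ (S.m/2 - S.N - S.m)) :=
        mul_le_mul_right (lintegral_mono_set hsubG2) _
    _ ≤ ENNReal.ofReal (a ^ S.p * (8:ℝ) ^ S.m) * ENNReal.ofReal ((2:ℝ)^(S.N:ℝ) * S.v1 *
        (1 - (2:ℝ)^((S.m/2 - S.N - S.m) + S.N))⁻¹ * (r/2)^((S.m/2 - S.N - S.m) + S.N)) :=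
        mul_le_mul_right (S.H2 (r/2) (S.m/2 - S.N - S.m) (by linarith)
          (by have := S.hm2; linarith)) _
    _ = ENNReal.ofReal cG2 := (ENNReal.ofReal_mul (by positivity)).symm
  -- shell bounds
  have hShEmpty : ∀ j, k-1 ≤ j → Sh j = ∅ := by
    intro j hj
    rw [hShdef]
    ext y
    simp only [mem_setOf_eq, mem_empty_iff_false, iff_false, not_and]
    intro hy1 hy2 hy3
    have hmono : (2:ℝ)^(k-1) ≤ 2^j := pow_le_pow_right₀ one_le_two hj
    nlinarith
  have hShBound : ∀ j, ∫⁻ y in Sh j, F y ≤ ENNReal.ofReal (csh j) := by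
    intro j
    by_cases hj : j < k-1
    swap
    · rw [hShEmpty j (by omega), Measure.restrict_empty, lintegral_zero_measure]
      exact zero_le
    · have h2j1 : (1:ℝ) ≤ 2^j := one_le_pow₀ one_le_two
      have hT1 : 1 ≤ R₁ * 2^j := by nlinarith
      have hT0 : (0:ℝ) < R₁ * 2^j := by linarith
      have hh0 : 0 ≤ S.h (R₁*2^j) := S.h_nonneg _ hT1
      have hmeasSh : MeasurableSet (Sh j) := by
        rw [hShdef]
        exact (measurableSet_lt measurable_const measurable_norm).inter
          ((measurableSet_le measurable_norm measurable_const).inter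
            (measurableSet_le measurable_norm measurable_const))
      have hsub : Sh j ⊆ closedBall (0:S.E) (R₁*2^(j+1)) := by
        intro y hy
        rw [hShdef, mem_setOf_eq] at hy
        exact mem_closedBall_zero_iff.mpr hy.2.1
      have hpt : ∀ y ∈ Sh j, F y ≤ ENNReal.ofReal
          (((2:ℝ)^|S.α| * S.h (R₁*2^j) ^ S.p * (R₁*2^j)^(S.m/2 - S.N)) / (r/2)^S.m) := by
        intro y hy
        rw [hShdef, mem_setOf_eq] at hy
        obtain ⟨hy1, hy2, hy3⟩ := hy
        have hy2' : ‖y‖ ≤ 2 * (R₁ * 2^j) := by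
          have e : R₁ * 2^(j+1) = 2 * (R₁ * 2^j) := by rw [pow_succ]; ring
          linarith [e ▸ hy2]
        have hwy := S.hw_shell (R₁*2^j) hT1 y hy1.le hy2'
        have hdxy : r/2 ≤ ‖x - y‖ := by
          have h2 := norm_sub_norm_le x y
          rw [← hrdef] at h2
          linarith
        apply ENNReal.ofReal_le_ofReal
        have e1 : S.g x y = S.w y / ‖x - y‖ ^ S.m := rfl
        rw [e1]
        exact div_le_div₀ (by positivity) hwy (Real.rpow_pos_of_pos (by linarith) _)
          (Real.rpow_le_rpow (by positivity) hdxy S.hm.le)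
      calc ∫⁻ y in Sh j, F y
          ≤ ENNReal.ofReal (((2:ℝ)^|S.α| * S.h (R₁*2^j) ^ S.p * (R₁*2^j)^(S.m/2 - S.N))
            / (r/2)^S.m) * volume (Sh j) := S.setlint_le_const _ _ hmeasSh _ hpt
      _ ≤ ENNReal.ofReal (((2:ℝ)^|S.α| * S.h (R₁*2^j) ^ S.p * (R₁*2^j)^(S.m/2 - S.N))
            / (r/2)^S.m) * volume (closedBall (0:S.E) (R₁*2^(j+1))) :=
          mul_le_mul_right (measure_mono hsub) _
      _ = ENNReal.ofReal (((2:ℝ)^|S.α| * S.h (R₁*2^j) ^ S.p * (R₁*2^j)^(S.m/2 - S.N))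
            / (r/2)^S.m) * ENNReal.ofReal ((R₁*2^(j+1))^(S.N:ℝ) * S.v1) := by
          rw [S.vol_cb _ _ (by positivity)]
      _ = ENNReal.ofReal ((((2:ℝ)^|S.α| * S.h (R₁*2^j) ^ S.p * (R₁*2^j)^(S.m/2 - S.N))
            / (r/2)^S.m) * ((R₁*2^(j+1))^(S.N:ℝ) * S.v1)) :=
          (ENNReal.ofReal_mul (by positivity)).symm
      _ = ENNReal.ofReal (csh j) := by
          rw [hcshdef]
          simp only [if_pos hj]
          congr 1
          have e2 : (R₁*2^(j+1) : ℝ) = (R₁*2^j)*2 := by rw [pow_succ]; ring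
          have e3 : ((R₁*2^j)*2 : ℝ)^(S.N:ℝ) = (R₁*2^j)^(S.N:ℝ) * (2:ℝ)^(S.N:ℝ) :=
            Real.mul_rpow hT0.le (by norm_num)
          have e4 : (R₁*2^j : ℝ)^(S.m/2 - S.N) * (R₁*2^j)^(S.N:ℝ) = (R₁*2^j)^(S.m/2) := by
            rw [← Real.rpow_add hT0]
            congr 1
            ring
          have e5 : ((R₁*2^j : ℝ))^(S.m/2) = R₁^(S.m/2) * S.b^j := by
            rw [Real.mul_rpow hR₁0.le (by positivity), two_pow_rpow j (S.m/2)]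
            rfl
          have e45 : (R₁*2^j : ℝ)^(S.m/2 - S.N) * (R₁*2^j)^(S.N:ℝ) = R₁^(S.m/2) * S.b^j := by
            rw [e4, e5]
          have ediv : (2:ℝ)^|S.α| * S.h (R₁*2^j) ^ S.p * (R₁*2^j)^(S.m/2 - S.N) / (r/2)^S.m
              = (2:ℝ)^|S.α| * S.h (R₁*2^j) ^ S.p * (R₁*2^j)^(S.m/2 - S.N)
                * ((2:ℝ)^S.m * r^(-S.m)) := by
            rw [Real.div_rpow hr0.le (by norm_num : (0:ℝ) ≤ 2), div_div_eq_mul_div,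
              Real.rpow_neg hr0.le]
            ring
          rw [ediv, e2, e3]
          unfold C6
          linear_combination ((2:ℝ)^|S.α| * S.h (R₁*2^j) ^ S.p * ((2:ℝ)^S.m * r^(-S.m))
            * (2:ℝ)^(S.N:ℝ) * S.v1) * e45
  -- sum over shells
  have hcsh_nonneg : ∀ j, 0 ≤ csh j := by
    intro j
    rw [hcshdef]
    dsimp only
    split_ifs with hj
    · have h2j1 : (1:ℝ) ≤ 2^j := one_le_pow₀ one_le_two
      have hT1 : 1 ≤ R₁ * 2^j := by nlinarith
      have hh0 := S.h_nonneg _ hT1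
      have hC6 := S.C6_pos
      have hb := S.hb0
      positivity
    · exact le_rfl
  set csum : ℝ := ∑ j ∈ Finset.range (k-1), csh j with hcsumdef
  have hSum : ∑' j, ∫⁻ y in Sh j, F y ≤ ENNReal.ofReal csum := by
    calc ∑' j, ∫⁻ y in Sh j, F y ≤ ∑' j, ENNReal.ofReal (csh j) := ENNReal.tsum_le_tsum hShBound
    _ = ∑ j ∈ Finset.range (k-1), ENNReal.ofReal (csh j) := by
        apply tsum_eq_sum
        intro j hj
        rw [Finset.mem_range, not_lt] at hj
        rw [hcshdef]
        dsimp only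
        rw [if_neg (by omega), ENNReal.ofReal_zero]
    _ = ENNReal.ofReal csum :=
        (ENNReal.ofReal_sum_of_nonneg (fun j _ => hcsh_nonneg j)).symm
  have hcsum0 : 0 ≤ csum := Finset.sum_nonneg (fun j _ => hcsh_nonneg j)
  -- nonnegativity of the region constants
  have hr2' : (0:ℝ) < (r/2)^S.m := Real.rpow_pos_of_pos (by linarith) _
  have hc0A : 0 ≤ cA0 := by
    rw [hcA0]
    apply mul_nonneg (div_nonneg (Real.rpow_nonneg (by positivity) _) hr2'.le) hux'0
  have hc0G0 : 0 ≤ cG0 := by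
    rw [hcG0]
    apply mul_nonneg (div_nonneg (Real.rpow_nonneg ha0 _) hr2'.le)
    apply mul_nonneg _ (Real.rpow_nonneg (by linarith) _)
    exact S.CH1a_pos.le
  have hc0G1 : 0 ≤ cG1 := by
    rw [hcG1]
    apply mul_nonneg (mul_nonneg (Real.rpow_nonneg ha0 _) (Real.rpow_nonneg (by linarith) _))
    apply mul_nonneg _ (Real.rpow_nonneg (by linarith) _)
    exact S.CH1b_pos.le
  have hc0G2 : 0 ≤ cG2 := by
    rw [hcG2]
    apply mul_nonneg (mul_nonneg (Real.rpow_nonneg ha0 _) (Real.rpow_nonneg (by norm_num) _))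
    apply mul_nonneg _ (Real.rpow_nonneg (by linarith) _)
    exact S.CH2c_pos.le
  -- combine everything in ℝ≥0∞
  have hall : ENNReal.ofReal (S.u x) ≤ ENNReal.ofReal (cA0 + cG0 + cG1 + cG2 + csum) := by
    rw [S.ofReal_u x hx0]
    calc S.Lg x ≤ _ := hchain
    _ ≤ ENNReal.ofReal cA0 + ENNReal.ofReal cG0 + ENNReal.ofReal cG1 + ENNReal.ofReal cG2
        + ENNReal.ofReal csum :=
        add_le_add (add_le_add (add_le_add (add_le_add hA0bound hG0bound) hG1bound) hG2bound) hSum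
    _ = ENNReal.ofReal (cA0 + cG0 + cG1 + cG2 + csum) := by
        rw [← ENNReal.ofReal_add hc0A hc0G0, ← ENNReal.ofReal_add (by linarith) hc0G1,
          ← ENNReal.ofReal_add (by linarith) hc0G2, ← ENNReal.ofReal_add (by linarith) hcsum0]
  have hux : S.u x ≤ cA0 + cG0 + cG1 + cG2 + csum := by
    have h0 : (0:ℝ) ≤ cA0 + cG0 + cG1 + cG2 + csum := by linarith
    exact (ENNReal.ofReal_le_ofReal_iff h0).mp hall
  -- final real computation
  have hrm2 : r ^ (-S.m) = r ^ (-(S.m/2)) * r ^ (-(S.m/2)) := by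
    rw [← Real.rpow_add hr0]
    congr 1
    ring
  have hdd : ∀ A : ℝ, A / (r/2)^S.m = A * ((2:ℝ)^S.m * r^(-S.m)) := by
    intro A
    rw [Real.div_rpow hr0.le (by norm_num : (0:ℝ) ≤ 2), div_div_eq_mul_div,
      Real.rpow_neg hr0.le]
    ring
  have ehalf : (r/2:ℝ)^(-(S.m/2)) = r^(-(S.m/2)) * (2:ℝ)^(S.m/2) := by
    rw [show (r/2:ℝ) = r * 2⁻¹ by ring, Real.mul_rpow hr0.le (by norm_num)]
    congr 1
    rw [Real.inv_rpow (by norm_num : (0:ℝ) ≤ 2),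
      ← Real.rpow_neg (by norm_num : (0:ℝ) ≤ 2), neg_neg]
  have hfA0 : cA0 ≤ r^(-(S.m/2)) * ((r^(-(S.m/2)) * R₁^(S.m/2)) * (S.CA * S.h (2*R₁+1))) := by
    have hu' : S.u x' ≤ S.h (2*R₁+1) * (2*R₁+1) ^ (-(S.m/2)) := by
      have h0 := S.u_le (2*R₁+1) (by linarith) x' (le_of_eq hx'norm.symm)
      rwa [hx'norm] at h0
    have h1 : (3*R₁+1 : ℝ)^S.m ≤ (4*R₁)^S.m :=
      Real.rpow_le_rpow (by positivity) (by linarith) S.hm.le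
    have h2 : ((2*R₁+1 : ℝ))^(-(S.m/2)) ≤ R₁^(-(S.m/2)) :=
      Real.rpow_le_rpow_of_nonpos hR₁0 (by linarith) (by linarith [S.hm2])
    rw [hcA0, div_mul_eq_mul_div, hdd]
    have hh' : 0 ≤ S.h (2*R₁+1) := S.h_nonneg _ (by linarith)
    have hstep1 : (3*R₁+1:ℝ)^S.m * S.u x' * ((2:ℝ)^S.m * r^(-S.m))
        ≤ (4*R₁)^S.m * (S.h (2*R₁+1) * R₁^(-(S.m/2))) * ((2:ℝ)^S.m * r^(-S.m)) := by
      apply mul_le_mul_of_nonneg_right _ (by positivity)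
      apply mul_le_mul h1 (le_trans hu' (mul_le_mul_of_nonneg_left h2 hh')) hux'0 (by positivity)
    apply le_trans hstep1
    apply le_of_eq
    have e1 : (4*R₁:ℝ)^S.m = (4:ℝ)^S.m * R₁^S.m := Real.mul_rpow (by norm_num) hR₁0.le
    have e2 : (4:ℝ)^S.m * (2:ℝ)^S.m = (8:ℝ)^S.m := by
      rw [← Real.mul_rpow (by norm_num) (by norm_num)]
      norm_num
    have e3 : R₁^S.m * R₁^(-(S.m/2)) = R₁^(S.m/2) := by
      rw [← Real.rpow_add hR₁0]
      congr 1
      ring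
    rw [e1, hrm2]
    unfold CA
    rw [← e2, ← e3]
    ring
  have hfG0 : cG0 = r^(-(S.m/2)) * (S.C70 * a^S.p) := by
    rw [hcG0]
    have efold : (2:ℝ)^(-(S.m/2 - S.N)) * S.v1 * (1 - (2:ℝ)^(-((S.m/2 - S.N) + S.N)))⁻¹
        = S.CH1a := rfl
    rw [efold]
    have hr2 : (0:ℝ) < r/2 := by linarith
    have eexp : (r/2:ℝ)^((S.m/2 - S.N) + S.N) = (r/2)^(S.m/2) := by
      congr 1
      ring
    have e1 : (r/2:ℝ)^(S.m/2) / (r/2)^S.m = (r/2)^(-(S.m/2)) := by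
      rw [← Real.rpow_sub hr2]
      congr 1
      ring
    rw [eexp]
    calc a^S.p/(r/2)^S.m * (S.CH1a * (r/2)^(S.m/2))
        = a^S.p * S.CH1a * ((r/2)^(S.m/2) / (r/2)^S.m) := by ring
    _ = a^S.p * S.CH1a * (r/2)^(-(S.m/2)) := by rw [e1]
    _ = a^S.p * S.CH1a * (r^(-(S.m/2)) * (2:ℝ)^(S.m/2)) := by rw [ehalf]
    _ = r^(-(S.m/2)) * (S.C70 * a^S.p) := by unfold C70; ring
  have hfG1 : cG1 = r^(-(S.m/2)) * (S.C71 * a^S.p) := by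
    rw [hcG1]
    have efold : (2:ℝ)^(-(-S.m)) * S.v1 * (1 - (2:ℝ)^(-((-S.m) + S.N)))⁻¹ = S.CH1b := rfl
    rw [efold]
    have e2 : (r/2:ℝ)^(S.m/2 - S.N) = r^(S.m/2 - S.N) * (2:ℝ)^((S.N:ℝ) - S.m/2) := by
      rw [show (r/2:ℝ) = r * 2⁻¹ by ring, Real.mul_rpow hr0.le (by norm_num)]
      congr 1
      rw [Real.inv_rpow (by norm_num : (0:ℝ) ≤ 2),
        ← Real.rpow_neg (by norm_num : (0:ℝ) ≤ 2)]
      congr 1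
      ring
    have e3 : (r/4:ℝ)^((-S.m) + S.N) = r^((-S.m) + S.N) * (4:ℝ)^(S.m - S.N) := by
      rw [show (r/4:ℝ) = r * 4⁻¹ by ring, Real.mul_rpow hr0.le (by norm_num)]
      congr 1
      rw [Real.inv_rpow (by norm_num : (0:ℝ) ≤ 4),
        ← Real.rpow_neg (by norm_num : (0:ℝ) ≤ 4)]
      congr 1
      ring
    have e4 : r^(S.m/2 - S.N) * r^((-S.m) + S.N) = r^(-(S.m/2)) := by
      rw [← Real.rpow_add hr0]
      congr 1
      ring
    calc a^S.p * (r/2)^(S.m/2 - S.N) * (S.CH1b * (r/4)^((-S.m) + S.N))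
        = a^S.p * S.CH1b * ((r/2)^(S.m/2 - S.N) * (r/4)^((-S.m)+S.N)) := by ring
    _ = a^S.p * S.CH1b * ((r^(S.m/2 - S.N) * r^((-S.m) + S.N))
        * ((2:ℝ)^((S.N:ℝ) - S.m/2) * (4:ℝ)^(S.m - S.N))) := by rw [e2, e3]; ring
    _ = a^S.p * S.CH1b * (r^(-(S.m/2)) * ((2:ℝ)^((S.N:ℝ) - S.m/2) * (4:ℝ)^(S.m - S.N))) := by
        rw [e4]
    _ = r^(-(S.m/2)) * (S.C71 * a^S.p) := by unfold C71; ring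
  have hfG2 : cG2 = r^(-(S.m/2)) * (S.C72 * a^S.p) := by
    rw [hcG2]
    have efold : (2:ℝ)^(S.N:ℝ) * S.v1 * (1 - (2:ℝ)^((S.m/2 - S.N - S.m) + S.N))⁻¹
        = S.CH2c := rfl
    rw [efold]
    have eexp : (r/2:ℝ)^((S.m/2 - S.N - S.m) + S.N) = (r/2)^(-(S.m/2)) := by
      congr 1
      ring
    rw [eexp, ehalf]
    unfold C72
    ring
  have hfSum : csum = r^(-(S.m/2)) * ((r^(-(S.m/2)) * R₁^(S.m/2)) *
      (S.C6 * ∑ j ∈ Finset.range (k-1), S.h (R₁*2^j) ^ S.p * S.b ^ j)) := by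
    rw [hcsumdef, Finset.mul_sum, Finset.mul_sum, Finset.mul_sum]
    apply Finset.sum_congr rfl
    intro j hj
    rw [Finset.mem_range] at hj
    rw [hcshdef]
    dsimp only
    rw [if_pos hj, hrm2]
    ring
  apply le_trans hux
  rw [hfG0, hfG1, hfG2, hfSum]
  have hstep := add_le_add_left (add_le_add_left (add_le_add_left
    (add_le_add_left hfA0 (r^(-(S.m/2)) * (S.C70 * a^S.p))) (r^(-(S.m/2)) * (S.C71 * a^S.p)))
    (r^(-(S.m/2)) * (S.C72 * a^S.p)))
    (r^(-(S.m/2)) * ((r^(-(S.m/2)) * R₁^(S.m/2)) *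
      (S.C6 * ∑ j ∈ Finset.range (k-1), S.h (R₁*2^j) ^ S.p * S.b ^ j)))
  apply le_trans hstep
  apply le_of_eq
  unfold C7
  ring

lemma pow_rpow_comm (y : ℝ) (hy : 0 ≤ y) (j : ℕ) (c : ℝ) : (y^j)^c = (y^c)^j := by
  rw [← Real.rpow_natCast y j, ← Real.rpow_mul hy, mul_comm, Real.rpow_mul hy, Real.rpow_natCast]

lemma min_rpow_bound1 {δ M bb pp : ℝ} (hδ : 0 < δ) (hM : 0 < M) (hbb : 1 < bb)
    (hp : 1 < pp) (j : ℕ) :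
    (min δ (M * (bb⁻¹)^j))^pp * bb^j
      ≤ (δ^((pp-1)/2) * M^((pp+1)/2)) * (bb^(-((pp-1)/2)))^j := by
  have hbb0 : (0:ℝ) < bb := by linarith
  set t := min δ (M * (bb⁻¹)^j) with htdef
  have ht : 0 < t := lt_min hδ (by positivity)
  have e0 : t^pp = t^((pp-1)/2) * t^((pp+1)/2) := by
    rw [← Real.rpow_add ht]
    congr 1
    ring
  have h1 : t^((pp-1)/2) ≤ δ^((pp-1)/2) :=
    Real.rpow_le_rpow ht.le (min_le_left _ _) (by linarith)
  have h2 : t^((pp+1)/2) ≤ (M * (bb⁻¹)^j)^((pp+1)/2) :=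
    Real.rpow_le_rpow ht.le (min_le_right _ _) (by linarith)
  have e1 : (M * (bb⁻¹)^j : ℝ)^((pp+1)/2) = M^((pp+1)/2) * ((bb⁻¹)^((pp+1)/2))^j := by
    rw [Real.mul_rpow hM.le (by positivity), pow_rpow_comm _ (by positivity)]
  have e2 : ((bb⁻¹)^((pp+1)/2) : ℝ) * bb = bb^(-((pp-1)/2)) := by
    rw [Real.inv_rpow hbb0.le, ← Real.rpow_neg hbb0.le]
    nth_rewrite 2 [show (bb:ℝ) = bb^(1:ℝ) from (Real.rpow_one bb).symm]
    rw [← Real.rpow_add hbb0]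
    congr 1
    ring
  calc t^pp * bb^j
      ≤ (δ^((pp-1)/2) * (M^((pp+1)/2) * ((bb⁻¹)^((pp+1)/2))^j)) * bb^j := by
        apply mul_le_mul_of_nonneg_right _ (by positivity)
        rw [e0]
        exact mul_le_mul h1 (h2.trans_eq e1) (Real.rpow_nonneg ht.le _)
          (Real.rpow_nonneg hδ.le _)
    _ = (δ^((pp-1)/2) * M^((pp+1)/2)) * (((bb⁻¹)^((pp+1)/2)) * bb)^j := by
        rw [mul_pow]
        ring
    _ = (δ^((pp-1)/2) * M^((pp+1)/2)) * (bb^(-((pp-1)/2)))^j := by rw [e2]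

lemma min_rpow_bound2 {δ c pp : ℝ} (hδ : 0 < δ) (hc : 0 < c) (hp : 1 < pp) :
    (min δ c)^pp ≤ δ^(pp-1) * c := by
  set t := min δ c with htdef
  have ht : 0 < t := lt_min hδ hc
  have e0 : t^pp = t^(pp-1) * t^(1:ℝ) := by
    rw [← Real.rpow_add ht]
    congr 1
    ring
  rw [e0, Real.rpow_one]
  exact mul_le_mul (Real.rpow_le_rpow ht.le (min_le_left _ _) (by linarith))
    (min_le_right _ _) ht.le (Real.rpow_nonneg hδ.le _)

set_option maxHeartbeats 4000000 in
/-- Fast decay upper bound. -/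
lemma upper_bound : ∃ c₂ : ℝ, 0 < c₂ ∧ ∀ x : S.E, 1 ≤ ‖x‖ →
    S.u x ≤ c₂ * ‖x‖ ^ (-S.m) := by
  classical
  have hb0 := S.hb0
  have hb1 := S.hb1
  have hp1 := S.hp1
  have hq : 0 < S.p - 1 := by linarith
  -- the geometric factor
  set lg : ℝ := S.b ^ (-((S.p-1)/2)) with hlgdef
  have hlg0 : 0 < lg := Real.rpow_pos_of_pos hb0 _
  have hlg1 : lg < 1 := Real.rpow_lt_one_of_one_lt_of_neg hb1 (by linarith)
  set cgeom : ℝ := (1 - lg)⁻¹ with hcgdef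
  have hcg0 : 0 < cgeom := inv_pos.mpr (by linarith)
  set K : ℝ := S.C6 * cgeom * (2*S.CA + S.b)^((S.p-1)/2) + S.C7 * S.b with hKdef
  have hK0 : 0 < K := by
    have h1 := S.C6_pos
    have h2 := S.C7_pos
    have h3 := S.CA_pos
    have h4 : (0:ℝ) < (2*S.CA + S.b)^((S.p-1)/2) := Real.rpow_pos_of_pos (by linarith) _
    positivity
  -- choice of δ
  set δ : ℝ := min 1 ((1/(4*K)) ^ (S.p-1)⁻¹) with hδdef
  have hδ0 : 0 < δ := lt_min one_pos (Real.rpow_pos_of_pos (by positivity) _)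
  have hδ1 : δ ≤ 1 := min_le_left _ _
  have hδK : K * δ^(S.p-1) ≤ 1/4 := by
    have h1 : δ^(S.p-1) ≤ ((1/(4*K)) ^ (S.p-1)⁻¹)^(S.p-1) :=
      Real.rpow_le_rpow hδ0.le (min_le_right _ _) (by linarith)
    have h2 : ((1/(4*K) : ℝ) ^ (S.p-1)⁻¹)^(S.p-1) = 1/(4*K) := by
      rw [← Real.rpow_mul (by positivity), inv_mul_cancel₀ hq.ne', Real.rpow_one]
    rw [h2] at h1
    calc K * δ^(S.p-1) ≤ K * (1/(4*K)) := mul_le_mul_of_nonneg_left h1 hK0.le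
    _ = 1/4 := by field_simp [hK0.ne']
  obtain ⟨R₁, hR₁1, hδR₁⟩ := S.h_small δ hδ0
  have hR₁0 : (0:ℝ) < R₁ := by linarith
  set M : ℝ := (2*S.CA + S.b) * δ with hMdef
  have hM0 : 0 < M := by
    have := S.CA_pos
    have := hb0
    positivity
  set β : ℝ := (S.b)⁻¹ with hβdef
  have hβ0 : 0 < β := inv_pos.mpr hb0
  have hβ1 : β ≤ 1 := by
    rw [hβdef]
    rw [inv_le_one_iff₀]
    right; linarith
  -- the dyadic induction
  have hind : ∀ k : ℕ, S.h (R₁*2^k) ≤ M * β^k := by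
    intro k
    induction k using Nat.strong_induction_on with
    | _ k IH =>
    have h2k1 : (1:ℝ) ≤ 2^k := one_le_pow₀ one_le_two
    have hRk1 : 1 ≤ R₁*2^k := by nlinarith
    have hhk_le_δ : S.h (R₁*2^k) ≤ δ :=
      le_trans (S.h_anti R₁ (R₁*2^k) hR₁1 (by nlinarith)) hδR₁
    rcases lt_or_ge k 2 with hk2 | hk2
    · -- base cases
      have hδM : δ ≤ M * β^k := by
        interval_cases k
        · simp only [pow_zero, mul_one, hMdef]
          nlinarith [S.CA_pos, hb0, hδ0]
        · rw [pow_one]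
          have ha1 : (S.b * δ) * β ≤ M * β := by
            apply mul_le_mul_of_nonneg_right _ hβ0.le
            rw [hMdef]
            nlinarith [S.CA_pos, hδ0]
          have ha2 : (S.b * δ) * β = δ := by
            rw [hβdef]
            field_simp
          linarith
      exact le_trans hhk_le_δ hδM
    · -- inductive step using the core estimate
      apply csSup_le
      · exact ⟨S.f (S.pt (R₁*2^k)), ⟨S.pt _, by
          rw [mem_setOf_eq, S.norm_pt _ (by positivity)], rfl⟩⟩
      rintro v ⟨x, hxmem, rfl⟩
      rw [mem_setOf_eq] at hxmem
      have hxn0 : (0:ℝ) < ‖x‖ := by nlinarith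
      have hcore := S.core R₁ hR₁1 k hk2 x hxmem
      -- multiply by ‖x‖^(m/2)
      have hfx : S.f x ≤ (‖x‖ ^ (-(S.m/2)) * R₁ ^ (S.m/2)) * (S.CA * S.h (2*R₁+1)
          + S.C6 * ∑ j ∈ Finset.range (k-1), S.h (R₁*2^j) ^ S.p * S.b ^ j)
          + S.C7 * S.h (R₁*2^(k-1)) ^ S.p := by
        have h1 : S.f x ≤ ‖x‖ ^ (S.m/2) * (‖x‖ ^ (-(S.m/2)) * ((‖x‖ ^ (-(S.m/2)) * R₁ ^ (S.m/2))
            * (S.CA * S.h (2*R₁+1)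
            + S.C6 * ∑ j ∈ Finset.range (k-1), S.h (R₁*2^j) ^ S.p * S.b ^ j)
            + S.C7 * S.h (R₁*2^(k-1)) ^ S.p)) :=
          mul_le_mul_of_nonneg_left hcore (Real.rpow_nonneg (norm_nonneg _) _)
        have h2 : ‖x‖ ^ (S.m/2) * ‖x‖ ^ (-(S.m/2)) = 1 := by
          rw [← Real.rpow_add hxn0]
          simp
        calc S.f x ≤ _ := h1
        _ = (‖x‖ ^ (S.m/2) * ‖x‖ ^ (-(S.m/2))) * ((‖x‖ ^ (-(S.m/2)) * R₁ ^ (S.m/2))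
            * (S.CA * S.h (2*R₁+1)
            + S.C6 * ∑ j ∈ Finset.range (k-1), S.h (R₁*2^j) ^ S.p * S.b ^ j)
            + S.C7 * S.h (R₁*2^(k-1)) ^ S.p) := by ring
        _ = _ := by rw [h2, one_mul]
      -- bound the prefactor by β^k
      have hpre : ‖x‖ ^ (-(S.m/2)) * R₁ ^ (S.m/2) ≤ β^k := by
        have h1 : ‖x‖ ^ (-(S.m/2)) ≤ (R₁*2^k) ^ (-(S.m/2)) :=
          Real.rpow_le_rpow_of_nonpos (by linarith) hxmem (by linarith [S.hm2])
        have h2 : ((R₁*2^k : ℝ)) ^ (-(S.m/2)) * R₁ ^ (S.m/2) = β^k := by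
          rw [Real.mul_rpow hR₁0.le (by positivity), pow_rpow_comm 2 (by norm_num)]
          have e1 : ((2:ℝ) ^ (-(S.m/2))) = β := by
            rw [hβdef, Real.rpow_neg (by norm_num)]
            congr 1
          have e2 : R₁ ^ (-(S.m/2)) * R₁ ^ (S.m/2) = 1 := by
            rw [← Real.rpow_add hR₁0]
            simp
          calc R₁ ^ (-(S.m/2)) * ((2:ℝ) ^ (-(S.m/2)))^k * R₁ ^ (S.m/2)
              = (R₁ ^ (-(S.m/2)) * R₁ ^ (S.m/2)) * ((2:ℝ) ^ (-(S.m/2)))^k := by ring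
          _ = ((2:ℝ) ^ (-(S.m/2)))^k := by rw [e2, one_mul]
          _ = β^k := by rw [e1]
        calc ‖x‖ ^ (-(S.m/2)) * R₁ ^ (S.m/2)
            ≤ ((R₁*2^k : ℝ)) ^ (-(S.m/2)) * R₁ ^ (S.m/2) :=
              mul_le_mul_of_nonneg_right h1 (Real.rpow_nonneg hR₁0.le _)
        _ = β^k := h2
      -- bound the shell sum
      have hsum : ∑ j ∈ Finset.range (k-1), S.h (R₁*2^j) ^ S.p * S.b ^ j
          ≤ (δ^((S.p-1)/2) * M^((S.p+1)/2)) * cgeom := by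
        have hterm : ∀ j ∈ Finset.range (k-1), S.h (R₁*2^j) ^ S.p * S.b ^ j
            ≤ (δ^((S.p-1)/2) * M^((S.p+1)/2)) * (S.b^(-((S.p-1)/2)))^j := by
          intro j hj
          rw [Finset.mem_range] at hj
          have h2j1 : (1:ℝ) ≤ 2^j := one_le_pow₀ one_le_two
          have hRj1 : 1 ≤ R₁*2^j := by nlinarith
          have haj : S.h (R₁*2^j) ≤ min δ (M * (S.b⁻¹)^j) := by
            apply le_min
            · exact le_trans (S.h_anti R₁ (R₁*2^j) hR₁1 (by nlinarith)) hδR₁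
            · have := IH j (by omega)
              rwa [hβdef] at this
          have h1 : S.h (R₁*2^j) ^ S.p ≤ (min δ (M * (S.b⁻¹)^j))^S.p :=
            Real.rpow_le_rpow (S.h_nonneg _ hRj1) haj S.hp0.le
          calc S.h (R₁*2^j) ^ S.p * S.b ^ j ≤ (min δ (M * (S.b⁻¹)^j))^S.p * S.b^j :=
              mul_le_mul_of_nonneg_right h1 (by positivity)
          _ ≤ _ := min_rpow_bound1 hδ0 hM0 hb1 hp1 j
        calc ∑ j ∈ Finset.range (k-1), S.h (R₁*2^j) ^ S.p * S.b ^ j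
            ≤ ∑ j ∈ Finset.range (k-1), (δ^((S.p-1)/2) * M^((S.p+1)/2))
              * (S.b^(-((S.p-1)/2)))^j := Finset.sum_le_sum hterm
        _ ≤ ∑' j : ℕ, (δ^((S.p-1)/2) * M^((S.p+1)/2)) * (S.b^(-((S.p-1)/2)))^j := by
            apply Summable.sum_le_tsum
            · intro j _
              positivity
            · exact (summable_geometric_of_lt_one hlg0.le hlg1).mul_left _
        _ = (δ^((S.p-1)/2) * M^((S.p+1)/2)) * cgeom := by
            rw [tsum_mul_left, tsum_geometric_of_lt_one hlg0.le hlg1]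
      -- bound the far term
      have hfar : S.h (R₁*2^(k-1)) ^ S.p ≤ δ^(S.p-1) * (M * β^(k-1)) := by
        have hterm : S.h (R₁*2^(k-1)) ≤ min δ (M * β^(k-1)) := by
          apply le_min
          · exact le_trans (S.h_anti R₁ (R₁*2^(k-1)) hR₁1
              (by nlinarith [one_le_pow₀ (one_le_two (α := ℝ)) (n := k-1)])) hδR₁
          · exact IH (k-1) (by omega)
        have h1 : S.h (R₁*2^(k-1)) ^ S.p ≤ (min δ (M * β^(k-1)))^S.p :=
          Real.rpow_le_rpow (S.h_nonneg _
            (by nlinarith [one_le_pow₀ (one_le_two (α := ℝ)) (n := k-1)])) hterm S.hp0.le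
        exact le_trans h1 (min_rpow_bound2 hδ0 (by positivity) hp1)
      -- put the numeric estimate together
      have hβk1 : β^(k-1) = β^k * S.b := by
        have e1 : β^(k-1) * β = β^k := by
          rw [← pow_succ]
          congr 1
          omega
        field_simp [hβdef] at *
        nlinarith [e1, pow_pos hβ0 k, pow_pos hβ0 (k-1)]
      have hbracket : (‖x‖ ^ (-(S.m/2)) * R₁ ^ (S.m/2)) * (S.CA * S.h (2*R₁+1)
          + S.C6 * ∑ j ∈ Finset.range (k-1), S.h (R₁*2^j) ^ S.p * S.b ^ j)
          + S.C7 * S.h (R₁*2^(k-1)) ^ S.p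
          ≤ β^k * (S.CA * δ + S.C6 * ((δ^((S.p-1)/2) * M^((S.p+1)/2)) * cgeom))
            + S.C7 * (δ^(S.p-1) * (M * (β^k * S.b))) := by
        have hh' : S.h (2*R₁+1) ≤ δ := le_trans (S.h_anti R₁ (2*R₁+1) hR₁1 (by linarith)) hδR₁
        have hh'0 : 0 ≤ S.h (2*R₁+1) := S.h_nonneg _ (by linarith)
        have hin : 0 ≤ S.CA * S.h (2*R₁+1)
            + S.C6 * ∑ j ∈ Finset.range (k-1), S.h (R₁*2^j) ^ S.p * S.b ^ j := by
          have hsum0 : (0:ℝ) ≤ ∑ j ∈ Finset.range (k-1), S.h (R₁*2^j) ^ S.p * S.b ^ j := by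
            apply Finset.sum_nonneg
            intro j hj
            have h2j1 : (1:ℝ) ≤ 2^j := one_le_pow₀ one_le_two
            have hRj1 : 1 ≤ R₁*2^j := by nlinarith
            have := S.h_nonneg _ hRj1
            positivity
          have := S.CA_pos
          have := S.C6_pos
          positivity
        have step1 : (‖x‖ ^ (-(S.m/2)) * R₁ ^ (S.m/2)) * (S.CA * S.h (2*R₁+1)
            + S.C6 * ∑ j ∈ Finset.range (k-1), S.h (R₁*2^j) ^ S.p * S.b ^ j)
            ≤ β^k * (S.CA * δ + S.C6 * ((δ^((S.p-1)/2) * M^((S.p+1)/2)) * cgeom)) := by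
          apply mul_le_mul hpre _ hin (by positivity)
          apply add_le_add
          · exact mul_le_mul_of_nonneg_left hh' S.CA_pos.le
          · exact mul_le_mul_of_nonneg_left hsum S.C6_pos.le
        have step2 : S.C7 * S.h (R₁*2^(k-1)) ^ S.p
            ≤ S.C7 * (δ^(S.p-1) * (M * (β^k * S.b))) := by
          apply mul_le_mul_of_nonneg_left _ S.C7_pos.le
          rw [← hβk1]
          exact hfar
        exact add_le_add step1 step2
      -- final numeric inequality
      have hnum : β^k * (S.CA * δ + S.C6 * ((δ^((S.p-1)/2) * M^((S.p+1)/2)) * cgeom))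
          + S.C7 * (δ^(S.p-1) * (M * (β^k * S.b))) ≤ M * β^k := by
        have hM2 : M^((S.p+1)/2) = M^((S.p-1)/2) * M^(1:ℝ) := by
          rw [← Real.rpow_add hM0]
          congr 1
          ring
        have hδM : δ^((S.p-1)/2) * M^((S.p-1)/2) = (2*S.CA + S.b)^((S.p-1)/2) * δ^(S.p-1) := by
          rw [← Real.mul_rpow hδ0.le hM0.le, hMdef]
          rw [show δ * ((2*S.CA + S.b) * δ) = (2*S.CA + S.b) * δ^(2:ℕ) by ring]
          rw [Real.mul_rpow (by nlinarith [S.CA_pos, hb0]) (by positivity),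
            ← Real.rpow_natCast δ 2, ← Real.rpow_mul hδ0.le]
          congr 2
          ring
        have key : S.CA * δ + S.C6 * ((δ^((S.p-1)/2) * M^((S.p+1)/2)) * cgeom)
            + S.C7 * (δ^(S.p-1) * (M * S.b)) ≤ M := by
          have e1 : S.C6 * ((δ^((S.p-1)/2) * M^((S.p+1)/2)) * cgeom)
              = (S.C6 * cgeom * (2*S.CA + S.b)^((S.p-1)/2) * δ^(S.p-1)) * M := by
            rw [hM2, Real.rpow_one]
            calc S.C6 * ((δ^((S.p-1)/2) * (M^((S.p-1)/2) * M)) * cgeom)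
                = S.C6 * cgeom * (δ^((S.p-1)/2) * M^((S.p-1)/2)) * M := by ring
            _ = S.C6 * cgeom * ((2*S.CA + S.b)^((S.p-1)/2) * δ^(S.p-1)) * M := by rw [hδM]
            _ = _ := by ring
          have e2 : S.C7 * (δ^(S.p-1) * (M * S.b)) = (S.C7 * S.b * δ^(S.p-1)) * M := by ring
          rw [e1, e2]
          have hKδ : (S.C6 * cgeom * (2*S.CA + S.b)^((S.p-1)/2) * δ^(S.p-1))
              + (S.C7 * S.b * δ^(S.p-1)) ≤ 1/4 := by
            calc (S.C6 * cgeom * (2*S.CA + S.b)^((S.p-1)/2) * δ^(S.p-1))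
                + (S.C7 * S.b * δ^(S.p-1)) = K * δ^(S.p-1) := by rw [hKdef]; ring
            _ ≤ 1/4 := hδK
          have hCAδ : S.CA * δ ≤ M/2 := by
            rw [hMdef]
            nlinarith [hb0, hδ0]
          have hM4 : (S.C6 * cgeom * (2*S.CA + S.b)^((S.p-1)/2) * δ^(S.p-1)) * M
              + (S.C7 * S.b * δ^(S.p-1)) * M ≤ (1/4) * M := by
            have := mul_le_mul_of_nonneg_right hKδ hM0.le
            nlinarith [this]
          nlinarith [hM4, hCAδ, hM0]
        calc β^k * (S.CA * δ + S.C6 * ((δ^((S.p-1)/2) * M^((S.p+1)/2)) * cgeom))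
            + S.C7 * (δ^(S.p-1) * (M * (β^k * S.b)))
            = β^k * (S.CA * δ + S.C6 * ((δ^((S.p-1)/2) * M^((S.p+1)/2)) * cgeom)
              + S.C7 * (δ^(S.p-1) * (M * S.b))) := by ring
        _ ≤ β^k * M := by
            apply mul_le_mul_of_nonneg_left key (by positivity)
        _ = M * β^k := mul_comm _ _
      exact le_trans hfx (le_trans hbracket hnum)
  -- translate to a pointwise bound
  refine ⟨max (M * (2*R₁)^(S.m/2)) (S.h 1 * (4*R₁)^(S.m/2)), ?_, ?_⟩
  · apply lt_max_of_lt_left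
    have h1 : (0:ℝ) < (2*R₁)^(S.m/2) := Real.rpow_pos_of_pos (by linarith) _
    positivity
  intro x hx1
  have hxn : (0:ℝ) < ‖x‖ := by linarith
  have hkey : S.f x ≤ max (M * (2*R₁)^(S.m/2)) (S.h 1 * (4*R₁)^(S.m/2)) * ‖x‖^(-(S.m/2)) := by
    rcases le_or_gt (4*R₁) ‖x‖ with hbig | hsmall
    · -- dyadic scale
      set n : ℕ := ⌊‖x‖/R₁⌋₊ with hndef
      have hn4 : 4 ≤ n := by
        apply Nat.le_floor
        rw [le_div_iff₀ hR₁0]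
        push_cast
        linarith
      have hn0 : n ≠ 0 := by omega
      set k : ℕ := Nat.log 2 n with hkdef
      have hlow : (2:ℝ)^k ≤ ‖x‖/R₁ := by
        have h1 : 2^k ≤ n := Nat.pow_log_le_self 2 hn0
        have h2 : (n:ℝ) ≤ ‖x‖/R₁ := Nat.floor_le (by positivity)
        calc ((2:ℝ))^k = ((2^k : ℕ) : ℝ) := by push_cast; ring
        _ ≤ (n:ℝ) := by exact_mod_cast h1
        _ ≤ ‖x‖/R₁ := h2
      have hhigh : ‖x‖/R₁ < 2^(k+1) := by
        have h1 : n < 2^(k+1) := Nat.lt_pow_succ_log_self one_lt_two n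
        have h2 : ‖x‖/R₁ < n + 1 := Nat.lt_floor_add_one _
        have h3 : (n:ℝ) + 1 ≤ ((2:ℕ):ℝ)^(k+1) := by
          have : n + 1 ≤ 2^(k+1) := h1
          exact_mod_cast this
        calc ‖x‖/R₁ < (n:ℝ) + 1 := h2
        _ ≤ ((2:ℕ):ℝ)^(k+1) := h3
        _ = 2^(k+1) := by norm_num
      have hxk : R₁ * 2^k ≤ ‖x‖ := by
        rw [le_div_iff₀ hR₁0] at hlow
        calc R₁ * 2^k = 2^k * R₁ := mul_comm _ _
        _ ≤ ‖x‖ := hlow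
      have hRk1 : (1:ℝ) ≤ R₁*2^k := by
        nlinarith [one_le_pow₀ (one_le_two (α := ℝ)) (n := k)]
      have hfh : S.f x ≤ M * β^k := le_trans (S.le_h _ hRk1 x hxk) (hind k)
      have hβk : β^k ≤ ‖x‖^(-(S.m/2)) * (2*R₁)^(S.m/2) := by
        have h2k' : ‖x‖/(2*R₁) ≤ 2^k := by
          rw [div_le_iff₀ (by linarith : (0:ℝ) < 2*R₁)]
          rw [div_lt_iff₀ hR₁0] at hhigh
          have e : (2:ℝ)^(k+1) = 2^k * 2 := pow_succ 2 k
          nlinarith [hhigh]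
        have hposx : (0:ℝ) < ‖x‖/(2*R₁) := by positivity
        have h1 : ((2:ℝ)^k)^(-(S.m/2)) ≤ (‖x‖/(2*R₁))^(-(S.m/2)) :=
          Real.rpow_le_rpow_of_nonpos hposx h2k' (by linarith [S.hm2])
        have e1 : β^k = ((2:ℝ)^k)^(-(S.m/2)) := by
          rw [pow_rpow_comm 2 (by norm_num)]
          congr 1
          rw [hβdef, Real.rpow_neg (by norm_num : (0:ℝ) ≤ 2)]
          rfl
        have e2 : (‖x‖/(2*R₁))^(-(S.m/2)) = ‖x‖^(-(S.m/2)) * (2*R₁)^(S.m/2) := by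
          rw [Real.div_rpow (norm_nonneg x) (by linarith : (0:ℝ) ≤ 2*R₁), div_eq_mul_inv,
            Real.rpow_neg (by linarith : (0:ℝ) ≤ 2*R₁), inv_inv]
        rw [e1]
        exact h1.trans_eq e2
      calc S.f x ≤ M * β^k := hfh
      _ ≤ M * (‖x‖^(-(S.m/2)) * (2*R₁)^(S.m/2)) := mul_le_mul_of_nonneg_left hβk hM0.le
      _ = (M * (2*R₁)^(S.m/2)) * ‖x‖^(-(S.m/2)) := by ring
      _ ≤ max (M * (2*R₁)^(S.m/2)) (S.h 1 * (4*R₁)^(S.m/2)) * ‖x‖^(-(S.m/2)) :=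
          mul_le_mul_of_nonneg_right (le_max_left _ _) (Real.rpow_nonneg (norm_nonneg _) _)
    · -- small region
      have hfx : S.f x ≤ S.h 1 := S.le_h 1 le_rfl x hx1
      have h1 : S.f x ≤ S.h 1 * ((4*R₁)^(S.m/2) * ‖x‖^(-(S.m/2))) := by
        have h2 : (1:ℝ) ≤ (4*R₁)^(S.m/2) * ‖x‖^(-(S.m/2)) := by
          have e1 : ‖x‖^(S.m/2) * ‖x‖^(-(S.m/2)) = 1 := by
            rw [← Real.rpow_add hxn]
            simp
          have h3 : ‖x‖^(S.m/2) ≤ (4*R₁)^(S.m/2) :=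
            Real.rpow_le_rpow (norm_nonneg _) hsmall.le (by linarith [S.hm2])
          have h4 : (0:ℝ) < ‖x‖^(-(S.m/2)) := Real.rpow_pos_of_pos hxn _
          nlinarith
        nlinarith [S.h_nonneg 1 le_rfl, hfx, S.f_nonneg x,
          mul_le_mul_of_nonneg_left h2 (S.h_nonneg 1 le_rfl)]
      calc S.f x ≤ S.h 1 * ((4*R₁)^(S.m/2) * ‖x‖^(-(S.m/2))) := h1
      _ = (S.h 1 * (4*R₁)^(S.m/2)) * ‖x‖^(-(S.m/2)) := by ring
      _ ≤ max (M * (2*R₁)^(S.m/2)) (S.h 1 * (4*R₁)^(S.m/2)) * ‖x‖^(-(S.m/2)) := by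
          apply mul_le_mul_of_nonneg_right (le_max_right _ _)
            (Real.rpow_nonneg (norm_nonneg _) _)
  -- convert f-bound into u-bound
  have e1 : S.u x = ‖x‖^(-(S.m/2)) * S.f x := by
    rw [f, ← mul_assoc, ← Real.rpow_add hxn]
    simp
  rw [e1]
  calc ‖x‖^(-(S.m/2)) * S.f x
      ≤ ‖x‖^(-(S.m/2)) * (max (M * (2*R₁)^(S.m/2)) (S.h 1 * (4*R₁)^(S.m/2)) * ‖x‖^(-(S.m/2))) :=
        mul_le_mul_of_nonneg_left hkey (Real.rpow_nonneg (norm_nonneg _) _)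
  _ = max (M * (2*R₁)^(S.m/2)) (S.h 1 * (4*R₁)^(S.m/2)) * (‖x‖^(-(S.m/2)) * ‖x‖^(-(S.m/2))) := by
      ring
  _ = max (M * (2*R₁)^(S.m/2)) (S.h 1 * (4*R₁)^(S.m/2)) * ‖x‖^(-S.m) := by
      rw [← Real.rpow_add hxn]
      congr 1
      ring

end HS

end RadialFastDecay

open RadialFastDecay

/-- **Fast decay of radial solutions** (Theorem 1.2 c)): a positive, bounded, radially
symmetric solution of the critical integral Hénon equation with
`|x|^{(N-2s)/2} u(x) → 0` as `|x| → ∞` satisfies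
`c₁ |x|^{-(N-2s)} ≤ u(x) ≤ c₂ |x|^{-(N-2s)}` for `|x| ≥ 1`. -/
theorem radial_solution_fast_decay
    (N : ℕ) (hN : 0 < N) (s α : ℝ) (hs0 : 0 < s) (hs1 : s < 1)
    (hNs : 2 * s < (N : ℝ)) (hα : -2 * s < α)
    (u : EuclideanSpace ℝ (Fin N) → ℝ)
    (hpos : ∀ x, 0 < u x)
    (hbd : ∃ C : ℝ, ∀ x, u x ≤ C)
    (hrad : ∀ x y : EuclideanSpace ℝ (Fin N), ‖x‖ = ‖y‖ → u x = u y)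
    (hcont : ContinuousOn u {x : EuclideanSpace ℝ (Fin N) | x ≠ 0})
    (hint : ∀ x : EuclideanSpace ℝ (Fin N), x ≠ 0 →
      Integrable (fun y : EuclideanSpace ℝ (Fin N) =>
        ‖y‖ ^ α * u y ^ (((N : ℝ) + 2 * α + 2 * s) / ((N : ℝ) - 2 * s))
          / ‖x - y‖ ^ ((N : ℝ) - 2 * s)))
    (heq : ∀ x : EuclideanSpace ℝ (Fin N), x ≠ 0 →
      u x = ∫ y : EuclideanSpace ℝ (Fin N),
        ‖y‖ ^ α * u y ^ (((N : ℝ) + 2 * α + 2 * s) / ((N : ℝ) - 2 * s))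
          / ‖x - y‖ ^ ((N : ℝ) - 2 * s))
    (hdecay : Filter.Tendsto (fun x : EuclideanSpace ℝ (Fin N) =>
      ‖x‖ ^ (((N : ℝ) - 2 * s) / 2) * u x) (Filter.cocompact _) (nhds 0)) :
    ∃ c₁ c₂ : ℝ, 0 < c₁ ∧ 0 < c₂ ∧
      ∀ x : EuclideanSpace ℝ (Fin N), 1 ≤ ‖x‖ →
        c₁ * ‖x‖ ^ (-((N : ℝ) - 2 * s)) ≤ u x ∧
        u x ≤ c₂ * ‖x‖ ^ (-((N : ℝ) - 2 * s)) := by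
  set S : HS := HS.mk N hN s α hs0 hNs hα u hpos hcont hint heq hdecay with hSdef
  obtain ⟨c₁, hc₁, hlow⟩ := S.lower_bound
  obtain ⟨c₂, hc₂, hupp⟩ := S.upper_bound
  refine ⟨c₁, c₂, hc₁, hc₂, ?_⟩
  intro x hx
  have hm' : S.m = (N:ℝ) - 2*s := rfl
  constructor
  · have h1 := hlow x hx
    rwa [hm'] at h1
  · have h1 := hupp x hx
    rwa [hm'] at h1
end
end
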